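/- arXiv:2505.15608 — 6 statements merged into one kernel-verified Lean document; each statement's English description precedes it below -/
import Mathlib

section
/- Let K be a field and let S be a polynomial ring over K of Krull dimension at most 2 (i.e. S = K[x] or S = K[x,y]). Then for every proper nonzero graded ideal I ⊆ S one has astab(I) = 1; that is, Ass(I^k) = Ass(I) for all integers k ≥ 1. -/
open MvPolynomial

/-- An ideal of a polynomial ring is *graded* (homogeneous) if it is generated by
homogeneous polynomials. -/
def IsGradedIdeal {n : ℕ} {K : Type*} [Field K]
    (I : Ideal (MvPolynomial (Fin n) K)) : Prop :=
  ∃ G : Set (MvPolynomial (Fin n) K),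
    (∀ g ∈ G, ∃ d, g.IsHomogeneous d) ∧ I = Ideal.span G

/-- `vp I p` is the `v_p`-number of `I`: the least degree of a homogeneous
polynomial `f` with `I : f = p`. -/
noncomputable def vp {n : ℕ} {K : Type*} [Field K]
    (I p : Ideal (MvPolynomial (Fin n) K)) : ℕ :=
  sInf {d | ∃ f : MvPolynomial (Fin n) K, f.IsHomogeneous d ∧
    Submodule.colon I (Ideal.span {f}) = p}

/-- `vnum I` is the `v`-number of `I`: the minimum of `vp I p` over the
associated primes `p` of `S/I`. -/
noncomputable def vnum {n : ℕ} {K : Type*} [Field K]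
    (I : Ideal (MvPolynomial (Fin n) K)) : ℕ :=
  sInf {d | ∃ p ∈ associatedPrimes (MvPolynomial (Fin n) K) (MvPolynomial (Fin n) K ⧸ I),
    ∃ f : MvPolynomial (Fin n) K, f.IsHomogeneous d ∧
      Submodule.colon I (Ideal.span {f}) = p}

/-- `astab I` is the index of ass-stability of `I`: the least `k₀ ≥ 1` such that
`Ass(I^k) = Ass(I^{k₀})` for all `k ≥ k₀`. -/
noncomputable def astab {n : ℕ} {K : Type*} [Field K]
    (I : Ideal (MvPolynomial (Fin n) K)) : ℕ :=
  sInf {k₀ | 1 ≤ k₀ ∧ ∀ k, k₀ ≤ k →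
    associatedPrimes (MvPolynomial (Fin n) K) (MvPolynomial (Fin n) K ⧸ I ^ k)
      = associatedPrimes (MvPolynomial (Fin n) K) (MvPolynomial (Fin n) K ⧸ I ^ k₀)}

/-- `alphaDeg I` is the initial degree `α(I) = min {d : I_d ≠ 0}` of `I`. -/
noncomputable def alphaDeg {n : ℕ} {K : Type*} [Field K]
    (I : Ideal (MvPolynomial (Fin n) K)) : ℕ :=
  sInf {d | ∃ f ∈ I, f ≠ 0 ∧ f.IsHomogeneous d}

/-- `vstab I` is the index of v-stability of `I`: the least `k₀ ≥ 1` such that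
`v(I^k) = α(I)·k + c` for all `k ≥ k₀`, where `c` is the constant such that this
holds for all `k ≫ 0`. -/
noncomputable def vstab {n : ℕ} {K : Type*} [Field K]
    (I : Ideal (MvPolynomial (Fin n) K)) : ℕ :=
  sInf {k₀ | 1 ≤ k₀ ∧ ∃ c : ℤ, ∀ k, k₀ ≤ k →
    (vnum (I ^ k) : ℤ) = (alphaDeg I : ℤ) * k + c}

/-- `assInf I` is the stable set of associated primes `Ass^∞(I)` of the powers of `I`. -/
def assInf {n : ℕ} {K : Type*} [Field K]
    (I : Ideal (MvPolynomial (Fin n) K)) : Set (Ideal (MvPolynomial (Fin n) K)) :=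
  {p | ∃ k₀, ∀ k, k₀ ≤ k →
    p ∈ associatedPrimes (MvPolynomial (Fin n) K) (MvPolynomial (Fin n) K ⧸ I ^ k)}

/-- `astabP I p` is the least `k₀` such that `p ∈ Ass(I^k)` for all `k ≥ k₀`. -/
noncomputable def astabP {n : ℕ} {K : Type*} [Field K]
    (I p : Ideal (MvPolynomial (Fin n) K)) : ℕ :=
  sInf {k₀ | ∀ k, k₀ ≤ k →
    p ∈ associatedPrimes (MvPolynomial (Fin n) K) (MvPolynomial (Fin n) K ⧸ I ^ k)}

/-- `vstabP I p` is the least `k₀` such that `p ∈ Ass(I^k)` and `v_p(I^k)` agrees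
with its eventual linear function `a_p·k + b_p` for all `k ≥ k₀`. -/
noncomputable def vstabP {n : ℕ} {K : Type*} [Field K]
    (I p : Ideal (MvPolynomial (Fin n) K)) : ℕ :=
  sInf {k₀ | ∃ a b : ℤ, ∀ k, k₀ ≤ k →
    p ∈ associatedPrimes (MvPolynomial (Fin n) K) (MvPolynomial (Fin n) K ⧸ I ^ k) ∧
    (vp (I ^ k) p : ℤ) = a * k + b}


set_option linter.unusedSectionVars false
set_option linter.unusedVariables false
set_option maxHeartbeats 1000000

section AuxUFD
open UniqueFactorizationMonoid


variable {R : Type*} [CommRing R] [IsDomain R]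

/-- Characterization of associated primes of `R ⧸ I` via colon ideals. -/
lemma assoc_prime_iff_colon [IsNoetherianRing R] (I' P : Ideal R) :
    P ∈ associatedPrimes R (R ⧸ I') ↔
      P.IsPrime ∧ ∃ g : R, P = I'.colon (Ideal.span {g}) := by
  rw [AssociatedPrimes.mem_iff, isAssociatedPrime_iff]
  constructor
  · rintro ⟨hP, x, hx⟩
    obtain ⟨g, rfl⟩ := Ideal.Quotient.mk_surjective (I := I') x
    refine ⟨hP, g, ?_⟩
    rw [hx]
    ext r
    rw [Submodule.mem_colon_singleton, Submodule.mem_bot, Ideal.mem_colon_span_singleton]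
    have : r • (Ideal.Quotient.mk I' g) = Ideal.Quotient.mk I' (r * g) := rfl
    rw [this, Ideal.Quotient.eq_zero_iff_mem]
  · rintro ⟨hP, g, rfl⟩
    refine ⟨hP, Ideal.Quotient.mk I' g, ?_⟩
    ext r
    rw [Submodule.mem_colon_singleton, Submodule.mem_bot, Ideal.mem_colon_span_singleton]
    have : r • (Ideal.Quotient.mk I' g) = Ideal.Quotient.mk I' (r * g) := rfl
    rw [this, Ideal.Quotient.eq_zero_iff_mem]

variable [UniqueFactorizationMonoid R]

lemma card_factors_le_of_dvd {a b : R} (hb : b ≠ 0) (h : a ∣ b) :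
    Multiset.card (factors a) ≤ Multiset.card (factors b) := by
  obtain ⟨c, rfl⟩ := h
  have ha : a ≠ 0 := left_ne_zero_of_mul hb
  have hc : c ≠ 0 := right_ne_zero_of_mul hb
  have := Multiset.card_eq_card_of_rel (factors_mul ha hc)
  rw [this, Multiset.card_add]
  exact Nat.le_add_right _ _

lemma card_factors_mul {a b : R} (ha : a ≠ 0) (hb : b ≠ 0) :
    Multiset.card (factors (a * b)) =
      Multiset.card (factors a) + Multiset.card (factors b) := by
  rw [Multiset.card_eq_card_of_rel (factors_mul ha hb), Multiset.card_add]

lemma one_le_card_factors {q : R} (hq : Prime q) :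
    1 ≤ Multiset.card (factors q) := by
  obtain ⟨p, hp⟩ := exists_mem_factors hq.ne_zero hq.not_unit
  exact Multiset.card_pos_iff_exists_mem.mpr ⟨p, hp⟩

/-- Extraction of the "gcd" of a nonzero ideal. -/
lemma exists_gcd (I : Ideal R) (hbot : I ≠ ⊥) :
    ∃ f : R, f ≠ 0 ∧ I ≤ Ideal.span {f} ∧
      ∀ q : R, Prime q → ¬ I ≤ Ideal.span {f * q} := by
  obtain ⟨a₀, ha₀I, ha₀⟩ := Submodule.exists_mem_ne_zero_of_ne_bot hbot
  set D : Set ℕ :=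
    {d | ∃ f : R, f ≠ 0 ∧ I ≤ Ideal.span {f} ∧ Multiset.card (factors f) = d} with hD
  have hne : D.Nonempty := by
    refine ⟨Multiset.card (factors (1 : R)), 1, one_ne_zero, ?_, rfl⟩
    rw [Ideal.span_singleton_one]; exact le_top
  have hbdd : BddAbove D := by
    refine ⟨Multiset.card (factors a₀), ?_⟩
    rintro d ⟨f, hf0, hfI, rfl⟩
    exact card_factors_le_of_dvd ha₀ (Ideal.mem_span_singleton.mp (hfI ha₀I))
  obtain ⟨f, hf0, hfI, hfd⟩ := Nat.sSup_mem hne hbdd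
  refine ⟨f, hf0, hfI, fun q hq hle => ?_⟩
  have hmem : Multiset.card (factors (f * q)) ∈ D :=
    ⟨f * q, mul_ne_zero hf0 hq.ne_zero, hle, rfl⟩
  have := le_csSup hbdd hmem
  rw [card_factors_mul hf0 hq.ne_zero, hfd] at this
  have := one_le_card_factors hq
  omega

/-- L1: if `a ∤ g`, there is a prime `q ∣ a` with `a ∣ h*g → q ∣ h`. -/
lemma exists_prime_divides_cofactor :
    ∀ (a : R), a ≠ 0 → ∀ g : R, ¬ a ∣ g →
      ∃ q : R, Prime q ∧ q ∣ a ∧ ∀ h : R, a ∣ h * g → q ∣ h := by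
  intro a
  induction a using UniqueFactorizationMonoid.induction_on_prime with
  | h₁ => intro h; exact absurd rfl h
  | h₂ x hx => intro _ g hg; exact absurd (hx.dvd) hg
  | h₃ b p hb hp IH =>
    intro _ g hg
    by_cases hpg : p ∣ g
    · obtain ⟨g', rfl⟩ := hpg
      have hbg' : ¬ b ∣ g' := fun ⟨t, ht⟩ => hg ⟨t, by rw [ht]; ring⟩
      obtain ⟨q, hq, hqb, H⟩ := IH hb g' hbg'
      refine ⟨q, hq, hqb.trans (dvd_mul_left b p), fun h hh => ?_⟩
      apply H
      have : p * (b) ∣ p * (h * g') := by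
        obtain ⟨t, ht⟩ := hh
        exact ⟨t, by rw [← ht]; ring⟩
      exact (mul_dvd_mul_iff_left hp.ne_zero).mp this
    · refine ⟨p, hp, dvd_mul_right p b, fun h hh => ?_⟩
      have : p ∣ h * g := dvd_trans (dvd_mul_right p b) hh
      rcases hp.2.2 _ _ this with h1 | h1
      · exact h1
      · exact absurd h1 hpg

/-- A nonzero element of a proper prime ideal has a prime factor inside the ideal. -/
lemma exists_prime_mem_of_mem (p : Ideal R) (hp : p.IsPrime) :
    ∀ a : R, a ∈ p → a ≠ 0 → ∃ q : R, Prime q ∧ q ∈ p ∧ q ∣ a := by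
  intro a
  induction a using UniqueFactorizationMonoid.induction_on_prime with
  | h₁ => intro _ h; exact absurd rfl h
  | h₂ x hx =>
    intro hxp _
    exact absurd (Ideal.eq_top_of_isUnit_mem _ hxp hx) hp.ne_top
  | h₃ b q hb hq IH =>
    intro hmem _
    rcases hp.mem_or_mem hmem with h1 | h1
    · exact ⟨q, hq, h1, dvd_mul_right q b⟩
    · obtain ⟨q', hq', hq'p, hq'b⟩ := IH h1 hb
      exact ⟨q', hq', hq'p, hq'b.trans (dvd_mul_left b q)⟩

lemma prod_not_mem {ι : Type*} {P : Ideal R} (hP : P.IsPrime) (s : Finset ι) (v : ι → R)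
    (h : ∀ i ∈ s, v i ∉ P) : ∏ i ∈ s, v i ∉ P := by
  classical
  induction s using Finset.induction with
  | empty => simpa using fun hh => hP.ne_top (Ideal.eq_top_of_isUnit_mem _ hh isUnit_one)
  | @insert j s' hx IH =>
    rw [Finset.prod_insert hx]
    intro hmem
    rcases hP.mem_or_mem hmem with h1 | h1
    · exact h j (Finset.mem_insert_self j s') h1
    · exact IH (fun i hi => h i (Finset.mem_insert_of_mem hi)) h1

end AuxUFD

section AuxMain
open UniqueFactorizationMonoid

set_option linter.unusedSectionVars false

variable {R : Type*} [CommRing R] [IsDomain R] [IsNoetherianRing R] [UniqueFactorizationMonoid R]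

/-- The stable description of associated primes of powers in "dimension ≤ 2". -/
theorem ass_pow_stable
    (Hdim : ∀ p : Ideal R, p.IsPrime → ∀ q₁ q₂ : R, Prime q₁ → Prime q₂ →
      q₁ ∈ p → q₂ ∈ p → ¬ q₁ ∣ q₂ → p.IsMaximal)
    (I : Ideal R) (hbot : I ≠ ⊥) (htop : I ≠ ⊤) :
    ∀ k : ℕ, 1 ≤ k →
      associatedPrimes R (R ⧸ I ^ k) = associatedPrimes R (R ⧸ I) := by
  classical
  obtain ⟨f, hf0, hfI, hfmax⟩ := exists_gcd I hbot
  set J : Ideal R := I.colon (Ideal.span {f}) with hJdef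
  have hIJ : I = Ideal.span {f} * J := by
    apply le_antisymm
    · intro a ha
      obtain ⟨b, rfl⟩ := Ideal.mem_span_singleton.mp (hfI ha)
      rw [Ideal.mem_span_singleton_mul]
      exact ⟨b, Ideal.mem_colon_span_singleton.mpr (by rwa [mul_comm]), rfl⟩
    · intro x hx
      obtain ⟨b, hb, rfl⟩ := Ideal.mem_span_singleton_mul.mp hx
      have := Ideal.mem_colon_span_singleton.mp hb
      rwa [mul_comm]
  have hJq : ∀ q : R, Prime q → ¬ J ≤ Ideal.span {q} := by
    intro q hq hle
    refine hfmax q hq ?_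
    calc I = Ideal.span {f} * J := hIJ
    _ ≤ Ideal.span {f} * Ideal.span {q} := Ideal.mul_mono_right hle
    _ = Ideal.span {f * q} := by rw [Ideal.span_singleton_mul_span_singleton]
  have hJbot : J ≠ ⊥ := by
    obtain ⟨a₀, ha₀I, ha₀⟩ := Submodule.exists_mem_ne_zero_of_ne_bot hbot
    obtain ⟨b, rfl⟩ := Ideal.mem_span_singleton.mp (hfI ha₀I)
    intro h
    have hb : b ∈ J := Ideal.mem_colon_span_singleton.mpr (by rwa [mul_comm])
    rw [h, Ideal.mem_bot] at hb
    exact ha₀ (by rw [hb, mul_zero])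
  -- maximality of primes containing J
  have hL3 : ∀ P : Ideal R, P.IsPrime → J ≤ P → P.IsMaximal := by
    intro P hP hJP
    obtain ⟨a₀, ha₀J, ha₀⟩ := Submodule.exists_mem_ne_zero_of_ne_bot hJbot
    obtain ⟨q₁, hq₁, hq₁P, _⟩ := exists_prime_mem_of_mem P hP a₀ (hJP ha₀J) ha₀
    obtain ⟨u, huJ, hu⟩ := SetLike.not_le_iff_exists.mp (hJq q₁ hq₁)
    have hu0 : u ≠ 0 := by rintro rfl; exact hu (Ideal.zero_mem _)
    obtain ⟨q₂, hq₂, hq₂P, hq₂u⟩ := exists_prime_mem_of_mem P hP u (hJP huJ) hu0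
    have hnd : ¬ q₁ ∣ q₂ := by
      intro hdvd
      exact hu (Ideal.mem_span_singleton.mpr (hdvd.trans hq₂u))
    exact Hdim P hP q₁ q₂ hq₁ hq₂ hq₁P hq₂P hnd
  -- the two k-independent sets
  set A : Set (Ideal R) := {P | ∃ q : R, Prime q ∧ q ∣ f ∧ P = Ideal.span {q}} with hA
  set B : Set (Ideal R) := {P | P.IsMaximal ∧ J ≤ P} with hB
  have key : ∀ k : ℕ, 1 ≤ k → associatedPrimes R (R ⧸ I ^ k) = A ∪ B := by
    intro k hk
    have hk0 : k ≠ 0 := by omega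
    have hfk0 : (f ^ k) ≠ 0 := pow_ne_zero _ hf0
    have hIk : I ^ k = Ideal.span {f ^ k} * J ^ k := by
      rw [hIJ, mul_pow, Ideal.span_singleton_pow]
    have hIkmem : ∀ x : R, x ∈ I ^ k ↔ ∃ w ∈ J ^ k, f ^ k * w = x := by
      intro x; rw [hIk]; exact Ideal.mem_span_singleton_mul
    have hIkbot : I ^ k ≠ ⊥ := by
      obtain ⟨a₀, ha₀I, ha₀⟩ := Submodule.exists_mem_ne_zero_of_ne_bot hbot
      intro h
      have : a₀ ^ k ∈ I ^ k := Ideal.pow_mem_pow ha₀I k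
      rw [h, Ideal.mem_bot] at this
      exact pow_ne_zero k ha₀ this
    ext P
    rw [assoc_prime_iff_colon]
    constructor
    · rintro ⟨hP, g, rfl⟩
      set P := (I ^ k).colon (Ideal.span {g}) with hPdef
      have hgIk : g ∉ I ^ k := by
        intro h
        exact hP.ne_top (Ideal.eq_top_iff_one _ |>.mpr
          (Ideal.mem_colon_span_singleton.mpr (by rw [one_mul]; exact h)))
      have hIkP : I ^ k ≤ P := fun x hx =>
        Ideal.mem_colon_span_singleton.mpr (Ideal.mul_mem_right g _ hx)
      by_cases hgf : f ^ k ∣ g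
      · -- embedded case : P ∈ B
        obtain ⟨g', rfl⟩ := hgf
        have hPJ : P = (J ^ k).colon (Ideal.span {g'}) := by
          ext x
          rw [hPdef, Ideal.mem_colon_span_singleton, Ideal.mem_colon_span_singleton]
          constructor
          · intro hx
            have hx' : f ^ k * (x * g') ∈ I ^ k := by
              have h9 : f ^ k * (x * g') = x * (f ^ k * g') := by ring
              rw [h9]; exact hx
            obtain ⟨w, hw, hfw⟩ := (hIkmem _).mp hx'
            have : w = x * g' := mul_left_cancel₀ hfk0 hfw
            rwa [← this]
          · intro hx
            have : x * (f ^ k * g') = f ^ k * (x * g') := by ring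
            rw [this]
            exact (hIkmem _).mpr ⟨x * g', hx, rfl⟩
        have hJkP : J ^ k ≤ P := by
          rw [hPJ]
          exact fun x hx => Ideal.mem_colon_span_singleton.mpr (Ideal.mul_mem_right g' _ hx)
        have hJP : J ≤ P := by
          intro u hu
          exact hP.mem_of_pow_mem k (hJkP (Ideal.pow_mem_pow hu k))
        exact Or.inr ⟨hL3 P hP hJP, hJP⟩
      · -- minimal case : P ∈ A
        obtain ⟨q, hq, hqfk, H⟩ := exists_prime_divides_cofactor (f ^ k) hfk0 g hgf
        have hqf : q ∣ f := hq.dvd_of_dvd_pow hqfk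
        have hPq : P ≤ Ideal.span {q} := by
          intro x hx
          obtain ⟨w, hw, hfw⟩ := (hIkmem _).mp (Ideal.mem_colon_span_singleton.mp hx)
          exact Ideal.mem_span_singleton.mpr (H x ⟨w, hfw.symm⟩)
        by_cases hqP : q ∈ P
        · left
          exact ⟨q, hq, hqf, le_antisymm hPq
            ((Ideal.span_singleton_le_iff_mem _).mpr hqP)⟩
        · exfalso
          have descent : ∀ n : ℕ, ∀ x ∈ P, q ^ n ∣ x := by
            intro n
            induction n with
            | zero => exact fun x _ => (pow_zero q) ▸ one_dvd x
            | succ n IH =>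
              intro x hx
              obtain ⟨x₁, rfl⟩ := Ideal.mem_span_singleton.mp (hPq hx)
              have hx₁ : x₁ ∈ P := ((hP.mem_or_mem hx).resolve_left hqP)
              obtain ⟨t, rfl⟩ := IH x₁ hx₁
              exact ⟨t, by ring⟩
          obtain ⟨x₀, hx₀P, hx₀⟩ := Submodule.exists_mem_ne_zero_of_ne_bot
            (show P ≠ ⊥ from fun h => hIkbot (le_bot_iff.mp (h ▸ hIkP)))
          obtain ⟨n, hn⟩ := FiniteMultiplicity.of_prime_left hq hx₀
          exact hn (descent (n + 1) x₀ hx₀P)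
    · rintro (⟨q, hq, hqf, rfl⟩ | ⟨hPmax, hJP⟩)
      · -- A ⊆ Ass
        have hqprime : (Ideal.span {q}).IsPrime :=
          (Ideal.span_singleton_prime hq.ne_zero).mpr hq
        obtain ⟨e, hfe⟩ := hqf
        obtain ⟨k', rfl⟩ : ∃ k', k = k' + 1 := ⟨k - 1, by omega⟩
        obtain ⟨u, huJ, hu⟩ := SetLike.not_le_iff_exists.mp (hJq q hq)
        have hqu : ¬ q ∣ u := fun h => hu (Ideal.mem_span_singleton.mpr h)
        have he0 : e ≠ 0 := by rintro rfl; exact hf0 (by rw [hfe, mul_zero])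
        have hd0 : e * f ^ k' ≠ 0 := mul_ne_zero he0 (pow_ne_zero _ hf0)
        refine ⟨hqprime, (e * f ^ k') * u ^ (k' + 1), ?_⟩
        ext x
        rw [Ideal.mem_span_singleton, Ideal.mem_colon_span_singleton]
        constructor
        · rintro ⟨c, rfl⟩
          refine (hIkmem _).mpr ⟨c * u ^ (k' + 1),
            Ideal.mul_mem_left _ c (Ideal.pow_mem_pow huJ _), ?_⟩
          rw [hfe]; ring
        · intro hx
          obtain ⟨w, hw, hfw⟩ := (hIkmem _).mp hx
          have hcancel : (e * f ^ k') * (q * w) = (e * f ^ k') * (x * u ^ (k' + 1)) := by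
            calc (e * f ^ k') * (q * w) = f ^ (k' + 1) * w := by rw [hfe]; ring
            _ = x * ((e * f ^ k') * u ^ (k' + 1)) := hfw
            _ = (e * f ^ k') * (x * u ^ (k' + 1)) := by ring
          have := mul_left_cancel₀ hd0 hcancel
          rcases hq.2.2 x (u ^ (k' + 1)) ⟨w, this.symm⟩ with h1 | h1
          · exact h1
          · exact absurd (hq.dvd_of_dvd_pow h1) hqu
      · -- B ⊆ Ass
        have hJkP : J ^ k ≤ P := le_trans (Ideal.pow_le_self hk0) hJP
        have hJkTop : J ^ k ≠ ⊤ := fun h => hPmax.ne_top (top_le_iff.mp (h ▸ hJkP))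
        -- all primes over J^k are maximal, and they form a finite set
        set Mset : Set (Ideal R) := {P' | P'.IsPrime ∧ J ^ k ≤ P'} with hMset
        have hMmax : ∀ P' ∈ Mset, P'.IsMaximal := by
          rintro P' ⟨hp', hle'⟩
          exact hL3 P' hp' (fun u hu => hp'.mem_of_pow_mem k (hle' (Ideal.pow_mem_pow hu k)))
        have hMeq : Mset = (J ^ k).minimalPrimes := by
          ext P'
          constructor
          · rintro ⟨hp', hle'⟩
            refine ⟨⟨hp', hle'⟩, ?_⟩
            rintro r ⟨hr, hrle⟩ hrP'
            have : r = P' := (hMmax r ⟨hr, hrle⟩).eq_of_le hp'.ne_top hrP'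
            exact this.ge
          · rintro ⟨⟨hp', hle'⟩, _⟩
            exact ⟨hp', hle'⟩
        have hMfin : Mset.Finite := by
          rw [hMeq, Ideal.minimalPrimes_eq_comap]
          exact (minimalPrimes.finite_of_isNoetherianRing (R ⧸ J ^ k)).image _
        have hPM : P ∈ Mset := ⟨hPmax.isPrime, hJkP⟩
        -- an element avoiding P but in all other primes over J^k
        set pick : Ideal R → R := fun P' =>
          if h : ∃ x, x ∈ P' ∧ x ∉ P then h.choose else 1 with hpick
        have hpick_spec : ∀ P' ∈ hMfin.toFinset.erase P, pick P' ∈ P' ∧ pick P' ∉ P := by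
          intro P' hP'
          rw [Finset.mem_erase, Set.Finite.mem_toFinset] at hP'
          obtain ⟨hne, hP'M⟩ := hP'
          have hex : ∃ x, x ∈ P' ∧ x ∉ P := by
            by_contra hno
            push_neg at hno
            exact hne ((hMmax P' hP'M).eq_of_le hPmax.ne_top hno)
          rw [hpick]
          simp only [dif_pos hex]
          exact hex.choose_spec
        set a : R := ∏ P' ∈ hMfin.toFinset.erase P, pick P' with ha
        have haP : a ∉ P :=
          prod_not_mem hPmax.isPrime _ _ (fun P' hP' => (hpick_spec P' hP').2)
        have haP' : ∀ P' ∈ hMfin.toFinset.erase P, a ∈ P' := by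
          intro P' hP'
          obtain ⟨t, ht⟩ := Finset.dvd_prod_of_mem pick hP'
          rw [ha, ht]
          exact Ideal.mul_mem_right t _ (hpick_spec P' hP').1
        have hrad : ∀ x ∈ P, x * a ∈ (J ^ k).radical := by
          intro x hx
          rw [Ideal.radical_eq_sInf]
          rw [Submodule.mem_sInf]
          rintro P' ⟨hle', hp'⟩
          by_cases hPP' : P' = P
          · subst hPP'; exact Ideal.mul_mem_right a _ hx
          · refine Ideal.mul_mem_left _ x (haP' P' ?_)
            rw [Finset.mem_erase, Set.Finite.mem_toFinset]
            exact ⟨hPP', hp', hle'⟩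
        obtain ⟨N, hN⟩ := Ideal.exists_radical_pow_le_of_fg (J ^ k) (IsNoetherian.noetherian _)
        have hPaN : P ^ N * Ideal.span {a ^ N} ≤ J ^ k := by
          have h1 : P * Ideal.span {a} ≤ (J ^ k).radical := by
            rw [Ideal.mul_le]
            intro x hx y hy
            obtain ⟨c, rfl⟩ := Ideal.mem_span_singleton.mp hy
            have : x * (a * c) = (x * a) * c := by ring
            rw [this]
            exact Ideal.mul_mem_right c _ (hrad x hx)
          calc P ^ N * Ideal.span {a ^ N} = (P * Ideal.span {a}) ^ N := by
                rw [mul_pow, Ideal.span_singleton_pow]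
          _ ≤ (J ^ k).radical ^ N := Ideal.pow_right_mono h1 N
          _ ≤ J ^ k := hN
        have hbP : a ^ N ∉ P := fun h => by
          rcases Nat.eq_zero_or_pos N with h0 | h0
          · rw [h0, pow_zero] at h
            exact hPmax.ne_top (Ideal.eq_top_of_isUnit_mem _ h isUnit_one)
          · exact haP (hPmax.isPrime.mem_of_pow_mem N h)
        set T : Set ℕ := {t | P ^ t * Ideal.span {a ^ N} ≤ J ^ k} with hT
        have hTne : T.Nonempty := ⟨N, hPaN⟩
        have ht₀mem : sInf T ∈ T := Nat.sInf_mem hTne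
        have ht₀0 : sInf T ≠ 0 := by
          intro h0
          rw [h0] at ht₀mem
          have : a ^ N ∈ J ^ k := by
            have := ht₀mem
            rw [hT] at this
            simp only [Set.mem_setOf_eq, pow_zero, one_mul] at this
            exact this (Ideal.mem_span_singleton_self _)
          exact hbP (hJkP this)
        obtain ⟨t', ht'⟩ : ∃ t', sInf T = t' + 1 := ⟨sInf T - 1, by omega⟩
        have ht'notin : t' ∉ T := Nat.notMem_of_lt_sInf (by omega)
        obtain ⟨g₀, hg₀mem, hg₀⟩ : ∃ g₀ ∈ P ^ t' * Ideal.span {a ^ N}, g₀ ∉ J ^ k := by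
          by_contra hno
          push_neg at hno
          exact ht'notin hno
        have hPg₀ : ∀ x ∈ P, x * g₀ ∈ J ^ k := by
          intro x hx
          have h1 : x * g₀ ∈ P * (P ^ t' * Ideal.span {a ^ N}) :=
            Ideal.mul_mem_mul hx hg₀mem
          have h2 : P * (P ^ t' * Ideal.span {a ^ N}) = P ^ (t' + 1) * Ideal.span {a ^ N} := by
            rw [← mul_assoc, ← pow_succ']
          rw [h2, ← ht'] at h1
          exact ht₀mem h1
        have hcolon : (J ^ k).colon (Ideal.span {g₀}) = P := by
          refine ((hPmax.eq_of_le ?_ ?_)).symm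
          · intro h
            have : (1 : R) ∈ (J ^ k).colon (Ideal.span {g₀}) := h ▸ Submodule.mem_top
            rw [Ideal.mem_colon_span_singleton, one_mul] at this
            exact hg₀ this
          · exact fun x hx => Ideal.mem_colon_span_singleton.mpr (hPg₀ x hx)
        refine ⟨hPmax.isPrime, f ^ k * g₀, ?_⟩
        ext x
        rw [Ideal.mem_colon_span_singleton]
        constructor
        · intro hx
          rw [← hcolon, Ideal.mem_colon_span_singleton] at hx
          have h9 : x * (f ^ k * g₀) = f ^ k * (x * g₀) := by ring
          rw [h9]
          exact (hIkmem _).mpr ⟨x * g₀, hx, rfl⟩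
        · intro hx
          have hx' : f ^ k * (x * g₀) ∈ I ^ k := by
            have h9 : f ^ k * (x * g₀) = x * (f ^ k * g₀) := by ring
            rw [h9]; exact hx
          obtain ⟨w, hw, hfw⟩ := (hIkmem _).mp hx'
          have hw' : w = x * g₀ := mul_left_cancel₀ hfk0 hfw
          rw [← hcolon, Ideal.mem_colon_span_singleton]
          rwa [← hw']
  intro k hk
  rw [key k hk, ← key 1 le_rfl, pow_one]

end AuxMain

section AuxL2
open Polynomial




variable {R : Type*} [CommRing R] [IsDomain R] [UniqueFactorizationMonoid R]

/-- If `q` is a prime polynomial not dividing `r`, then the ideal `(q, r)` contains a nonzero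
constant. -/
theorem exists_C_mem_span_pair (q r : R[X]) (hq : Prime q) (hqr : ¬ q ∣ r) :
    ∃ c : R, c ≠ 0 ∧ Polynomial.C c ∈ Ideal.span {q, r} := by
  classical
  by_cases hdeg : q.natDegree = 0
  · refine ⟨q.coeff 0, ?_, ?_⟩
    · intro h
      apply hq.ne_zero
      rw [Polynomial.eq_C_of_natDegree_eq_zero hdeg, h, map_zero]
    · rw [← Polynomial.eq_C_of_natDegree_eq_zero hdeg]
      exact Ideal.subset_span (by simp)
  · set F := FractionRing R
    set φ₀ : R →+* F := algebraMap R F with hφ₀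
    have hφ₀inj : Function.Injective φ₀ := IsFractionRing.injective R F
    set φ : R[X] →+* F[X] := Polynomial.mapRingHom φ₀ with hφ
    have hφinj : Function.Injective φ := Polynomial.map_injective φ₀ hφ₀inj
    set q' : F[X] := q.map φ₀ with hq'
    set r' : F[X] := r.map φ₀ with hr'
    set Ix : Ideal F[X] := Ideal.span {q', r'} with hIx
    have hprinc : Ix.IsPrincipal := IsPrincipalIdealRing.principal Ix
    set d : F[X] := Submodule.IsPrincipal.generator Ix with hd
    have hdspan : Ideal.span {d} = Ix := Ideal.span_singleton_generator Ix
    -- helper to clear denominators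
    have clear : ∀ (s : F[X]), ∃ (cs : R) (s₀ : R[X]), cs ≠ 0 ∧
        φ s₀ = Polynomial.C (φ₀ cs) * s := by
      intro s
      obtain ⟨b, hb⟩ := IsLocalization.integerNormalization_map_to_map (nonZeroDivisors R) s
      refine ⟨b, IsLocalization.integerNormalization (nonZeroDivisors R) s,
        nonZeroDivisors.coe_ne_zero b, ?_⟩
      rw [hφ]
      show Polynomial.map φ₀ _ = _
      rw [hb, Algebra.smul_def]
      all_goals congr 1
      all_goals rw [Polynomial.algebraMap_apply, hφ₀]
    by_cases hu : IsUnit d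
    · have htop : Ix = ⊤ := by
        rw [← hdspan, Ideal.span_singleton_eq_top]; exact hu
      have h1 : (1 : F[X]) ∈ Ix := by rw [htop]; exact Submodule.mem_top
      obtain ⟨a, b, hab⟩ := Ideal.mem_span_pair.mp h1
      obtain ⟨ca, a₀, hca, ha⟩ := clear a
      obtain ⟨cb, b₀, hcb, hbb⟩ := clear b
      refine ⟨ca * cb, mul_ne_zero hca hcb, ?_⟩
      rw [Ideal.mem_span_pair]
      refine ⟨Polynomial.C cb * a₀, Polynomial.C ca * b₀, ?_⟩
      apply hφinj
      have expand : φ (Polynomial.C cb * a₀ * q + Polynomial.C ca * b₀ * r)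
          = Polynomial.C (φ₀ (ca * cb)) * (a * q' + b * r') := by
        simp only [map_add, map_mul, ha, hbb, Polynomial.C_mul]
        have h₁ : φ (Polynomial.C cb) = Polynomial.C (φ₀ cb) := by
          simp [hφ]
        have h₂ : φ (Polynomial.C ca) = Polynomial.C (φ₀ ca) := by
          simp [hφ]
        have h₃ : φ q = q' := rfl
        have h₄ : φ r = r' := rfl
        rw [h₁, h₂, h₃, h₄]
        ring
      rw [expand, hab, mul_one]
      simp [hφ]
    · exfalso
      -- q is primitive, hence irreducible in F[X]
      have hprim : q.IsPrimitive := by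
        intro c₀ hc₀
        obtain ⟨t, ht⟩ := hc₀
        rcases hq.irreducible.isUnit_or_isUnit ht with h1 | h1
        · exact Polynomial.isUnit_C.mp h1
        · exfalso
          apply hdeg
          rw [ht, Polynomial.natDegree_mul (fun h => by simp [h] at ht; exact hq.ne_zero ht) 
            h1.ne_zero]
          rw [Polynomial.natDegree_C, Polynomial.natDegree_eq_zero_of_isUnit h1]
      letI : NormalizationMonoid R := UniqueFactorizationMonoid.normalizationMonoid.toNormalizationMonoid
      letI : NormalizedGCDMonoid R := UniqueFactorizationMonoid.toNormalizedGCDMonoid R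
      have hqirr' : Irreducible q' :=
        (hprim.irreducible_iff_irreducible_map_fraction_map (K := F)).mp hq.irreducible
      have hdq : d ∣ q' := by
        rw [← Ideal.mem_span_singleton, hdspan]
        exact Ideal.subset_span (by simp)
      have hdr : d ∣ r' := by
        rw [← Ideal.mem_span_singleton, hdspan]
        exact Ideal.subset_span (by simp)
      obtain ⟨e, he⟩ := hdq
      rcases hqirr'.isUnit_or_isUnit he with h1 | h1
      · exact hu h1
      · -- q' divides r'
        have hq'r' : q' ∣ r' := by
          obtain ⟨s, hs⟩ := hdr
          refine ⟨((h1.unit⁻¹ : Units F[X]) : F[X]) * s, ?_⟩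
          have key : e * (((h1.unit⁻¹ : Units F[X]) : F[X]) * s) = s := by
            rw [← mul_assoc, h1.mul_val_inv, one_mul]
          rw [hs, he, mul_assoc, key]
        obtain ⟨s', hs'⟩ := hq'r'
        obtain ⟨cs, s₀, hcs, hsmap⟩ := clear s'
        have : φ (Polynomial.C cs * r) = φ (q * s₀) := by
          have h₁ : φ (Polynomial.C cs) = Polynomial.C (φ₀ cs) := by simp [hφ]
          rw [map_mul, map_mul, h₁, hsmap]
          have h₃ : φ r = r' := rfl
          have h₄ : φ q = q' := rfl
          rw [h₃, h₄, hs']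
          ring
        have heq := hφinj this
        have hqdvd : q ∣ Polynomial.C cs * r := ⟨s₀, heq⟩
        rcases hq.2.2 _ _ hqdvd with h2 | h2
        · have hCne : Polynomial.C cs ≠ 0 := fun h => hcs (by
            simpa using congrArg (fun p => Polynomial.coeff p 0) h)
          have := Polynomial.natDegree_le_of_dvd h2 hCne
          rw [Polynomial.natDegree_C] at this
          omega
        · exact hqr h2

end AuxL2

/-- The "dimension ≤ 2" property used in the main argument. -/
def DimLE2 (S : Type*) [CommRing S] : Prop :=
  ∀ p : Ideal S, p.IsPrime → ∀ q₁ q₂ : S, Prime q₁ → Prime q₂ →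
    q₁ ∈ p → q₂ ∈ p → ¬ q₁ ∣ q₂ → p.IsMaximal

lemma dimLE2_transfer {A B : Type*} [CommRing A] [CommRing B] (e : A ≃+* B)
    (hB : DimLE2 B) : DimLE2 A := by
  intro p hp q₁ q₂ hq₁ hq₂ hq₁p hq₂p hnd
  set p' : Ideal B := p.comap (e.symm : B →+* A) with hp'
  haveI : p'.IsPrime := Ideal.IsPrime.comap _ (hK := hp)
  have hmem : ∀ x : A, e x ∈ p' ↔ x ∈ p := by
    intro x; rw [hp', Ideal.mem_comap]; simp
  have hmax' : p'.IsMaximal := by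
    refine hB p' inferInstance (e q₁) (e q₂) ?_ ?_ ((hmem _).mpr hq₁p) ((hmem _).mpr hq₂p) ?_
    · exact (MulEquiv.prime_iff e.toMulEquiv).mpr hq₁
    · exact (MulEquiv.prime_iff e.toMulEquiv).mpr hq₂
    · intro hdvd
      apply hnd
      have := map_dvd (e.symm : B →+* A) hdvd
      simpa using this
  have : p = Ideal.comap (e : A →+* B) p' := by
    ext x; rw [Ideal.mem_comap]; exact ((hmem x)).symm
  rw [this]
  haveI := hmax'
  exact Ideal.comap_isMaximal_of_equiv e (p := p')

lemma dimLE2_polynomial_field {K : Type*} [Field K] : DimLE2 (Polynomial K) := by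
  intro p hp q₁ q₂ hq₁ hq₂ hq₁p hq₂p hnd
  exfalso
  have hmax : (Ideal.span {q₁}).IsMaximal :=
    PrincipalIdealRing.isMaximal_of_irreducible hq₁.irreducible
  have hle : Ideal.span {q₁} ≤ p := (Ideal.span_singleton_le_iff_mem _).mpr hq₁p
  have := hmax.eq_of_le hp.ne_top hle
  rw [← this] at hq₂p
  exact hnd (Ideal.mem_span_singleton.mp hq₂p)

lemma dimLE2_mv0 {K : Type*} [Field K] : DimLE2 (MvPolynomial (Fin 0) K) := by
  intro p hp q₁ q₂ hq₁ hq₂ hq₁p hq₂p hnd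
  exfalso
  apply hq₁.not_unit
  set e₀ := MvPolynomial.isEmptyAlgEquiv K (Fin 0)
  have h0 : e₀ q₁ ≠ 0 := fun h => hq₁.ne_zero (by
    have := congrArg e₀.symm h
    simpa using this)
  have : IsUnit (e₀ q₁) := isUnit_iff_ne_zero.mpr h0
  have := this.map e₀.symm
  simpa using this

lemma dimLE2_mv1 {K : Type*} [Field K] : DimLE2 (MvPolynomial (Fin 1) K) := by
  refine dimLE2_transfer ?_ (dimLE2_polynomial_field (K := K))
  exact ((MvPolynomial.finSuccEquiv K 0).trans
    (Polynomial.mapAlgEquiv (MvPolynomial.isEmptyAlgEquiv K (Fin 0)))).toRingEquiv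

section Dim2

variable {K : Type*} [Field K]

local notation "S₂" => MvPolynomial (Fin 2) K
local notation "A₁" => MvPolynomial (Fin 1) K

noncomputable def epsKA : A₁ ≃ₐ[K] Polynomial K :=
  (MvPolynomial.finSuccEquiv K 0).trans
    (Polynomial.mapAlgEquiv (MvPolynomial.isEmptyAlgEquiv K (Fin 0)))

lemma epsKA_X0 : (epsKA (K := K)) (X 0) = Polynomial.X := by
  unfold epsKA
  simp [MvPolynomial.finSuccEquiv_X_zero]

/-- From two coprime primes inside `p`, produce an algebraic relation on `X 1` mod `p`. -/
lemma exists_alg_rel_X1 (p : Ideal S₂) (q₁ q₂ : S₂) (hq₁ : Prime q₁) (hq₂ : Prime q₂)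
    (hq₁p : q₁ ∈ p) (hq₂p : q₂ ∈ p) (hnd : ¬ q₁ ∣ q₂) :
    ∃ c : Polynomial K, c ≠ 0 ∧ Polynomial.aeval (X 1 : S₂) c ∈ p := by
  set e := MvPolynomial.finSuccEquiv K 1 with he
  have hQ1 : Prime (e q₁) := (MulEquiv.prime_iff e.toRingEquiv.toMulEquiv).mpr hq₁
  have hQ2 : Prime (e q₂) := (MulEquiv.prime_iff e.toRingEquiv.toMulEquiv).mpr hq₂
  have hnd' : ¬ e q₁ ∣ e q₂ := by
    intro hdvd
    apply hnd
    have := map_dvd e.symm hdvd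
    simpa using this
  obtain ⟨c₁, hc₁, hmem⟩ := exists_C_mem_span_pair (e q₁) (e q₂) hQ1 hnd'
  obtain ⟨a, b, hab⟩ := Ideal.mem_span_pair.mp hmem
  -- pull back to p
  have hpull : e.symm (Polynomial.C c₁) ∈ p := by
    have := congrArg e.symm hab
    rw [map_add, map_mul, map_mul] at this
    simp only [AlgEquiv.symm_apply_apply] at this
    rw [← this]
    exact Ideal.add_mem p (Ideal.mul_mem_left _ _ hq₁p) (Ideal.mul_mem_left _ _ hq₂p)
  -- identify e.symm (C c₁) with aeval (X 1) (epsKA c₁)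
  have hΦ : (e.symm.toAlgHom.comp (IsScalarTower.toAlgHom K A₁ (Polynomial A₁)))
      = (Polynomial.aeval (X 1 : S₂)).comp (epsKA (K := K)).toAlgHom := by
    apply MvPolynomial.algHom_ext
    intro i
    have hi : i = 0 := Subsingleton.elim i 0
    subst hi
    simp only [AlgHom.coe_comp, Function.comp_apply, AlgEquiv.toAlgHom_eq_coe,
      AlgHom.coe_coe, IsScalarTower.coe_toAlgHom']
    rw [AlgEquiv.coe_toAlgHom]
    erw [epsKA_X0]
    rw [Polynomial.aeval_X]
    have : (algebraMap A₁ (Polynomial A₁)) (X 0) = Polynomial.C (X 0) := rfl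
    rw [this]
    have hsucc : e ((X 1 : S₂)) = Polynomial.C (X 0) := by
      have := MvPolynomial.finSuccEquiv_X_succ (R := K) (n := 1) (j := 0)
      have h10 : ((0 : Fin 1)).succ = (1 : Fin 2) := rfl
      rw [h10] at this
      exact this
    rw [← hsucc]
    simp
  have happ' : e.symm (Polynomial.C c₁) = Polynomial.aeval (X 1 : S₂) (epsKA (K := K) c₁) := by
    have h := DFunLike.congr_fun hΦ c₁
    simp only [AlgHom.coe_comp, Function.comp_apply, AlgEquiv.toAlgHom_eq_coe,
      AlgHom.coe_coe, IsScalarTower.coe_toAlgHom'] at h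
    have hC : (algebraMap A₁ (Polynomial A₁)) c₁ = Polynomial.C c₁ := rfl
    rwa [hC] at h
  refine ⟨epsKA (K := K) c₁, ?_, ?_⟩
  · intro h
    apply hc₁
    have := congrArg (epsKA (K := K)).symm h
    simpa using this
  · rw [← happ']
    exact hpull

lemma dimLE2_mv2 : DimLE2 (MvPolynomial (Fin 2) K) := by
  intro p hp q₁ q₂ hq₁ hq₂ hq₁p hq₂p hnd
  -- algebraic relation on X 1
  obtain ⟨c1, hc10, hc1⟩ := exists_alg_rel_X1 p q₁ q₂ hq₁ hq₂ hq₁p hq₂p hnd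
  -- algebraic relation on X 0, via the swap automorphism
  obtain ⟨c0, hc00, hc0⟩ : ∃ c : Polynomial K, c ≠ 0 ∧ Polynomial.aeval (X 0 : S₂) c ∈ p := by
    set σ := MvPolynomial.renameEquiv K (Equiv.swap (0 : Fin 2) 1) with hσ
    set p' : Ideal S₂ := p.comap (σ : S₂ →+* S₂) with hp'
    haveI hp'p : p'.IsPrime := Ideal.IsPrime.comap _ (hK := hp)
    have hmem : ∀ x : S₂, x ∈ p' ↔ σ x ∈ p := fun x => Ideal.mem_comap
    have h1 : Prime (σ.symm q₁) := (MulEquiv.prime_iff σ.symm.toRingEquiv.toMulEquiv).mpr hq₁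
    have h2 : Prime (σ.symm q₂) := (MulEquiv.prime_iff σ.symm.toRingEquiv.toMulEquiv).mpr hq₂
    have hnd' : ¬ σ.symm q₁ ∣ σ.symm q₂ := by
      intro hdvd
      apply hnd
      have := map_dvd σ hdvd
      simpa using this
    obtain ⟨c, hc, hcmem⟩ := exists_alg_rel_X1 p' (σ.symm q₁) (σ.symm q₂) h1 h2
      ((hmem _).mpr (by simpa using hq₁p)) ((hmem _).mpr (by simpa using hq₂p)) hnd'
    refine ⟨c, hc, ?_⟩
    have := (hmem _).mp hcmem
    have hswap : σ (Polynomial.aeval (X 1 : S₂) c) = Polynomial.aeval (X 0 : S₂) c := by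
      rw [(Polynomial.aeval_algHom_apply σ (X 1 : S₂) c).symm]
      congr 1
      rw [hσ]
      simp [Equiv.swap_apply_right]
    rwa [hswap] at this
  -- now the quotient is a finite-dimensional K-algebra, a domain, hence a field
  haveI := hp
  set z0 : S₂ ⧸ p := Ideal.Quotient.mk p (X 0) with hz0
  set z1 : S₂ ⧸ p := Ideal.Quotient.mk p (X 1) with hz1
  have halg0 : IsIntegral K z0 := by
    refine (IsAlgebraic.isIntegral ⟨c0, hc00, ?_⟩)
    have h := Polynomial.aeval_algHom_apply (Ideal.Quotient.mkₐ K p) (X 0 : S₂) c0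
    have hz : z0 = Ideal.Quotient.mkₐ K p (X 0) := by rw [hz0, Ideal.Quotient.mkₐ_eq_mk]
    rw [hz, h, Ideal.Quotient.mkₐ_eq_mk, Ideal.Quotient.eq_zero_iff_mem]
    exact hc0
  have halg1 : IsIntegral K z1 := by
    refine (IsAlgebraic.isIntegral ⟨c1, hc10, ?_⟩)
    have h := Polynomial.aeval_algHom_apply (Ideal.Quotient.mkₐ K p) (X 1 : S₂) c1
    have hz : z1 = Ideal.Quotient.mkₐ K p (X 1) := by rw [hz1, Ideal.Quotient.mkₐ_eq_mk]
    rw [hz, h, Ideal.Quotient.mkₐ_eq_mk, Ideal.Quotient.eq_zero_iff_mem]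
    exact hc1
  have hadj : Algebra.adjoin K ({z0, z1} : Set (S₂ ⧸ p)) = ⊤ := by
    have h1 : Algebra.adjoin K (Set.range (X : Fin 2 → S₂)) = ⊤ := MvPolynomial.adjoin_range_X
    have h2 : (Algebra.adjoin K (Set.range (X : Fin 2 → S₂))).map (Ideal.Quotient.mkₐ K p)
        = Algebra.adjoin K ((Ideal.Quotient.mkₐ K p) '' (Set.range (X : Fin 2 → S₂))) :=
      AlgHom.map_adjoin _ _
    have h3 : ((Ideal.Quotient.mkₐ K p) '' (Set.range (X : Fin 2 → S₂))) = {z0, z1} := by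
      ext u
      constructor
      · rintro ⟨x, ⟨i, rfl⟩, rfl⟩
        have : i = 0 ∨ i = 1 := by omega
        rcases this with rfl | rfl
        · left; simp [hz0]
        · right; simp [hz1]
      · rintro (rfl | rfl)
        · exact ⟨X 0, ⟨0, rfl⟩, by simp [hz0]⟩
        · exact ⟨X 1, ⟨1, rfl⟩, by simp [hz1]⟩
    rw [h1, Algebra.map_top] at h2
    rw [h3] at h2
    rw [← h2]
    rw [AlgHom.range_eq_top]
    exact Ideal.Quotient.mkₐ_surjective K p
  have hfg : (Algebra.adjoin K ({z0, z1} : Set (S₂ ⧸ p))).toSubmodule.FG := by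
    refine fg_adjoin_of_finite (Set.toFinite _) ?_
    rintro x (rfl | rfl)
    · exact halg0
    · exact halg1
  haveI hfin : Module.Finite K (S₂ ⧸ p) := by
    constructor
    rw [← Algebra.top_toSubmodule, ← hadj]
    exact hfg
  haveI : Algebra.IsIntegral K (S₂ ⧸ p) := Algebra.IsIntegral.of_finite K _
  exact Ideal.Quotient.maximal_of_isField p (isField_of_isIntegral_of_isField' (Field.toIsField K))

end Dim2

/-- If `S` is a polynomial ring over a field `K` of Krull dimension at
most 2 (i.e. `S = K[x]` or `S = K[x,y]`), then every proper nonzero graded ideal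
`I ⊆ S` satisfies `astab(I) = 1`, that is, `Ass(I^k) = Ass(I)` for all `k ≥ 1`. -/
theorem astab_eq_one_of_dim_le_two (K : Type*) [Field K] (n : ℕ) (hn : n ≤ 2)
    (I : Ideal (MvPolynomial (Fin n) K)) (hgr : IsGradedIdeal I)
    (hbot : I ≠ ⊥) (htop : I ≠ ⊤) :
    astab I = 1 ∧
    ∀ k : ℕ, 1 ≤ k →
      associatedPrimes (MvPolynomial (Fin n) K) (MvPolynomial (Fin n) K ⧸ I ^ k)
        = associatedPrimes (MvPolynomial (Fin n) K) (MvPolynomial (Fin n) K ⧸ I) := by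
  have Hdim : DimLE2 (MvPolynomial (Fin n) K) := by
    interval_cases n
    · exact dimLE2_mv0
    · exact dimLE2_mv1
    · exact dimLE2_mv2
  have key := ass_pow_stable Hdim I hbot htop
  have h1 : (1 : ℕ) ∈ {k₀ | 1 ≤ k₀ ∧ ∀ k, k₀ ≤ k →
      associatedPrimes (MvPolynomial (Fin n) K) (MvPolynomial (Fin n) K ⧸ I ^ k)
        = associatedPrimes (MvPolynomial (Fin n) K) (MvPolynomial (Fin n) K ⧸ I ^ k₀)} := by
    refine ⟨le_rfl, fun k hk => ?_⟩
    rw [pow_one]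
    exact key k hk
  constructor
  · refine le_antisymm (Nat.sInf_le h1) ?_
    exact (Nat.sInf_mem (⟨1, h1⟩ : Set.Nonempty _)).1
  · exact key
end

section
/- Let K be a field, S = K[x,y], b ≥ 1 an integer, and I = (x^{2b+1}, x^2 y^{2b-1}, y^{2b+1}) ⊆ S. Then v(I^k) = (2b+1)k for every integer k with 1 ≤ k ≤ b-1. -/
open MvPolynomial

/-- Dominance predicate: the exponent `m` dominates a generator of `I^k` for
`I = (x^{2b'+3}, x^2 y^{2b'+1}, y^{2b'+3})`. -/
def MyDom (b' k : ℕ) (m : Fin 2 →₀ ℕ) : Prop :=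
  ∃ a c e : ℕ, a + c + e = k ∧
    (2*b'+3)*a + 2*c ≤ m 0 ∧ (2*b'+1)*c + (2*b'+3)*e ≤ m 1

lemma MyDom.mono {b' k : ℕ} {m m' : Fin 2 →₀ ℕ} (h : MyDom b' k m)
    (h0 : m 0 ≤ m' 0) (h1 : m 1 ≤ m' 1) : MyDom b' k m' := by
  obtain ⟨a, c, e, ha, hb, hc⟩ := h
  exact ⟨a, c, e, ha, hb.trans h0, hc.trans h1⟩

/-- The ideal of polynomials all of whose monomials dominate a generator of `I^k`. -/
def myIdeal (K : Type*) [Field K] (b' k : ℕ) : Ideal (MvPolynomial (Fin 2) K) where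
  carrier := {p | ∀ m ∈ p.support, MyDom b' k m}
  zero_mem' := by simp
  add_mem' := by
    intro p q hp hq m hm
    classical
    rcases Finset.mem_union.mp (MvPolynomial.support_add hm) with h | h
    exacts [hp m h, hq m h]
  smul_mem' := by
    intro c p hp m hm
    classical
    rw [smul_eq_mul] at hm
    obtain ⟨m1, hm1, m2, hm2, rfl⟩ := Finset.mem_add.mp (MvPolynomial.support_mul c p hm)
    exact (hp m2 hm2).mono (by rw [Finsupp.add_apply]; omega) (by rw [Finsupp.add_apply]; omega)

lemma mem_myIdeal_iff {K : Type*} [Field K] {b' k : ℕ} {p : MvPolynomial (Fin 2) K} :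
    p ∈ myIdeal K b' k ↔ ∀ m ∈ p.support, MyDom b' k m := Iff.rfl

lemma myIdeal_mul_le {K : Type*} [Field K] (b' i j : ℕ) :
    myIdeal K b' i * myIdeal K b' j ≤ myIdeal K b' (i + j) := by
  rw [Ideal.mul_le]
  intro p hp q hq
  rw [mem_myIdeal_iff] at *
  intro m hm
  classical
  obtain ⟨m1, hm1, m2, hm2, rfl⟩ := Finset.mem_add.mp (MvPolynomial.support_mul p q hm)
  obtain ⟨a, c, e, h0, h1, h2⟩ := hp m1 hm1
  obtain ⟨a2, c2, e2, h0', h1', h2'⟩ := hq m2 hm2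
  refine ⟨a + a2, c + c2, e + e2, by omega, ?_, ?_⟩
  · rw [Finsupp.add_apply]
    calc (2*b'+3)*(a+a2) + 2*(c+c2)
        = ((2*b'+3)*a + 2*c) + ((2*b'+3)*a2 + 2*c2) := by ring
      _ ≤ m1 0 + m2 0 := Nat.add_le_add h1 h1'
  · rw [Finsupp.add_apply]
    calc (2*b'+1)*(c+c2) + (2*b'+3)*(e+e2)
        = ((2*b'+1)*c + (2*b'+3)*e) + ((2*b'+1)*c2 + (2*b'+3)*e2) := by ring
      _ ≤ m1 1 + m2 1 := Nat.add_le_add h2 h2'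

lemma pow_le_myIdeal {K : Type*} [Field K] (b' : ℕ) (I : Ideal (MvPolynomial (Fin 2) K))
    (hI : I = Ideal.span {X 0 ^ (2*b'+3), X 0 ^ 2 * X 1 ^ (2*b'+1), X 1 ^ (2*b'+3)}) :
    ∀ k, I ^ k ≤ myIdeal K b' k := by
  have hI1 : I ≤ myIdeal K b' 1 := by
    rw [hI, Ideal.span_le]
    rintro g hg
    classical
    simp only [Set.mem_insert_iff, Set.mem_singleton_iff] at hg
    have h2 : (X 0 ^ 2 * X 1 ^ (2*b'+1) : MvPolynomial (Fin 2) K)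
        = monomial (Finsupp.single 0 2 + Finsupp.single 1 (2*b'+1)) 1 := by
      rw [X_pow_eq_monomial, X_pow_eq_monomial, monomial_mul, one_mul]
    rcases hg with rfl | rfl | rfl
    · show ∀ m ∈ _, MyDom b' 1 m
      intro m hm
      rw [X_pow_eq_monomial, support_monomial, if_neg one_ne_zero, Finset.mem_singleton] at hm
      subst hm
      exact ⟨1, 0, 0, rfl, by simp, by simp⟩
    · show ∀ m ∈ _, MyDom b' 1 m
      intro m hm
      rw [h2, support_monomial, if_neg one_ne_zero, Finset.mem_singleton] at hm
      subst hm
      refine ⟨0, 1, 0, rfl, by simp, by simp⟩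
    · show ∀ m ∈ _, MyDom b' 1 m
      intro m hm
      rw [X_pow_eq_monomial, support_monomial, if_neg one_ne_zero, Finset.mem_singleton] at hm
      subst hm
      exact ⟨0, 0, 1, rfl, by simp, by simp⟩
  intro k
  induction k with
  | zero =>
      rw [pow_zero, Ideal.one_eq_top]
      intro p _
      exact fun m _ => ⟨0, 0, 0, rfl, by simp, by simp⟩
  | succ n ih =>
      rw [pow_succ]
      exact le_trans (Ideal.mul_mono ih hI1) (myIdeal_mul_le b' n 1)

lemma myNoDom (b' k' : ℕ) (hk : k' + 1 ≤ b') {a c e : ℕ} (h0 : a + c + e = k' + 1)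
    (h1 : (2*b'+3)*a + 2*c ≤ 2*k'+1)
    (h2 : (2*b'+1)*c + (2*b'+3)*e ≤ (2*b'+1)*(k'+1) + 1) : False := by
  by_cases ha : a = 0
  · subst ha
    have key : ((2*b'+3)*0 + 2*c) + ((2*b'+1)*c + (2*b'+3)*e)
        = (2*b'+1)*(k'+1) + 2*(k'+1) := by rw [← h0]; ring
    simp only [Nat.mul_zero, Nat.zero_add] at key h1
    generalize (2*b'+1)*c = q at key h2
    generalize (2*b'+3)*e = r at key h2
    generalize (2*b'+1)*(k'+1) = u at key h2
    omega
  · have ha1 : 0 < a := Nat.pos_of_ne_zero ha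
    have hge : 2*b'+3 ≤ (2*b'+3)*a := Nat.le_mul_of_pos_right _ ha1
    generalize (2*b'+3)*a = t at h1 hge
    omega

lemma myGap (b' k' : ℕ) (hk : k' + 1 ≤ b') {a c e a2 c2 e2 : ℕ}
    (h0 : a + c + e = k' + 1) (h0' : a2 + c2 + e2 = k' + 1)
    (heq : (2*b'+3)*a + 2*c = (2*b'+3)*a2 + 2*c2 + 1) : False := by
  rcases lt_trichotomy a a2 with h | rfl | h
  · have hm : (2*b'+3)*(a+1) ≤ (2*b'+3)*a2 := Nat.mul_le_mul_left _ (by omega)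
    rw [Nat.mul_add, Nat.mul_one] at hm
    generalize (2*b'+3)*a = t at heq hm
    generalize (2*b'+3)*a2 = t2 at heq hm
    omega
  · generalize (2*b'+3)*a = t at heq
    omega
  · have hm : (2*b'+3)*(a2+1) ≤ (2*b'+3)*a := Nat.mul_le_mul_left _ (by omega)
    rw [Nat.mul_add, Nat.mul_one] at hm
    generalize (2*b'+3)*a = t at heq hm
    generalize (2*b'+3)*a2 = t2 at heq hm
    omega

lemma myColonAnn {R : Type*} [CommRing R] (I : Ideal R) (x : R) :
    Submodule.colon I (Ideal.span {x})
      = (Submodule.span R {(Ideal.Quotient.mk I x : R ⧸ I)}).annihilator := by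
  ext r
  rw [Submodule.mem_annihilator_span_singleton,
    show r • (Ideal.Quotient.mk I x) = Ideal.Quotient.mk I (r * x) from rfl,
    Ideal.Quotient.eq_zero_iff_mem]
  exact Submodule.mem_colon_span_singleton

lemma mySpanXKer {K : Type*} [Field K] :
    Ideal.span {(X 0 : MvPolynomial (Fin 2) K), X 1}
      = RingHom.ker (constantCoeff : MvPolynomial (Fin 2) K →+* K) := by
  have himg : ({X 0, X 1} : Set (MvPolynomial (Fin 2) K)) = X '' Set.univ := by
    ext q
    simp [Set.mem_image, Fin.exists_fin_two, eq_comm]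
  ext p
  rw [himg, mem_ideal_span_X_image, RingHom.mem_ker]
  constructor
  · intro h
    by_contra hc
    have h0 : (0 : Fin 2 →₀ ℕ) ∈ p.support := mem_support_iff.mpr hc
    obtain ⟨i, -, hi⟩ := h 0 h0
    exact hi rfl
  · intro h m hm
    by_contra hc
    push_neg at hc
    have hm0 : m = 0 := by
      ext i
      exact hc i (Set.mem_univ i)
    subst hm0
    exact mem_support_iff.mp hm h

lemma mySpanXPrime {K : Type*} [Field K] :
    (Ideal.span {(X 0 : MvPolynomial (Fin 2) K), X 1}).IsPrime := by
  rw [mySpanXKer]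
  exact RingHom.ker_isPrime _


/-- For `S = K[x,y]`, `b ≥ 1` and
`I = (x^{2b+1}, x^2 y^{2b-1}, y^{2b+1})`, one has `v(I^k) = (2b+1)k` for `1 ≤ k ≤ b-1`. -/
theorem vnum_pow_of_lt (K : Type*) [Field K] (b : ℕ) (hb : 1 ≤ b)
    (I : Ideal (MvPolynomial (Fin 2) K))
    (hI : I = Ideal.span {X 0 ^ (2*b+1), X 0 ^ 2 * X 1 ^ (2*b-1), X 1 ^ (2*b+1)})
    (k : ℕ) (hk1 : 1 ≤ k) (hk2 : k ≤ b - 1) :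
    vnum (I ^ k) = (2*b+1) * k := by
  classical
  obtain ⟨b', rfl⟩ : ∃ b', b = b' + 1 := ⟨b - 1, by omega⟩
  obtain ⟨k', rfl⟩ : ∃ k', k = k' + 1 := ⟨k - 1, by omega⟩
  have hk : k' + 1 ≤ b' := by omega
  rw [show 2*(b'+1)+1 = 2*b'+3 from by ring, show 2*(b'+1)-1 = 2*b'+1 from by omega] at hI
  rw [show (2*(b'+1)+1) * (k'+1) = (2*b'+3) * (k'+1) from by ring]
  -- generators
  have hg1 : (X 0 ^ (2*b'+3) : MvPolynomial (Fin 2) K) ∈ I := by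
    rw [hI]; exact Ideal.subset_span (Set.mem_insert _ _)
  have hg2 : (X 0 ^ 2 * X 1 ^ (2*b'+1) : MvPolynomial (Fin 2) K) ∈ I := by
    rw [hI]; exact Ideal.subset_span (Set.mem_insert_of_mem _ (Set.mem_insert _ _))
  have hg3 : (X 1 ^ (2*b'+3) : MvPolynomial (Fin 2) K) ∈ I := by
    rw [hI]
    exact Ideal.subset_span (Set.mem_insert_of_mem _ (Set.mem_insert_of_mem _ rfl))
  have hPow := pow_le_myIdeal b' I hI
  -- the witness monomial
  set m₀ : Fin 2 →₀ ℕ :=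
    Finsupp.single 0 (2*k'+1) + Finsupp.single 1 ((2*b'+1)*(k'+1)+1) with hm₀def
  have hm₀0 : m₀ 0 = 2*k'+1 := by simp [hm₀def]
  have hm₀1 : m₀ 1 = (2*b'+1)*(k'+1)+1 := by simp [hm₀def]
  set f₀ : MvPolynomial (Fin 2) K := monomial m₀ 1 with hf₀def
  have hf₀X : f₀ = X 0 ^ (2*k'+1) * X 1 ^ ((2*b'+1)*(k'+1)+1) := by
    rw [hf₀def, hm₀def, X_pow_eq_monomial, X_pow_eq_monomial, monomial_mul, one_mul]
  have hX0f : X 0 * f₀ ∈ I ^ (k'+1) := by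
    rw [show X 0 * f₀ = X 1 * (X 0 ^ 2 * X 1 ^ (2*b'+1)) ^ (k'+1) from by rw [hf₀X]; ring]
    exact Ideal.mul_mem_left _ _ (Ideal.pow_mem_pow hg2 _)
  have hX1f : X 1 * f₀ ∈ I ^ (k'+1) := by
    rw [show X 1 * f₀
        = X 0 * ((X 0 ^ 2 * X 1 ^ (2*b'+1)) ^ k' * X 1 ^ (2*b'+3)) from by rw [hf₀X]; ring]
    refine Ideal.mul_mem_left _ _ ?_
    rw [pow_succ]
    exact Ideal.mul_mem_mul (Ideal.pow_mem_pow hg2 _) hg3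
  have hback : ∀ r : MvPolynomial (Fin 2) K, r * f₀ ∈ I ^ (k'+1) →
      r ∈ Ideal.span {(X 0 : MvPolynomial (Fin 2) K), X 1} := by
    intro r hr
    rw [mySpanXKer, RingHom.mem_ker]
    by_contra hc
    have hco : coeff m₀ (r * f₀) ≠ 0 := by
      have h := coeff_mul_monomial 0 m₀ (1:K) r
      rw [zero_add, mul_one] at h
      rw [hf₀def, h]
      exact hc
    obtain ⟨a, c, e, h0, h1, h2⟩ := hPow (k'+1) hr m₀ (mem_support_iff.mpr hco)
    rw [hm₀0] at h1
    rw [hm₀1] at h2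
    exact myNoDom b' k' hk h0 h1 h2
  have hcolon : Submodule.colon (I ^ (k'+1)) (Ideal.span {f₀})
      = Ideal.span {(X 0 : MvPolynomial (Fin 2) K), X 1} := by
    apply le_antisymm
    · intro r hr
      have := Submodule.mem_colon_span_singleton.mp hr
      rw [smul_eq_mul] at this
      exact hback r this
    · rw [Ideal.span_le]
      rintro g hg
      simp only [Set.mem_insert_iff, Set.mem_singleton_iff] at hg
      rcases hg with rfl | rfl
      · exact Submodule.mem_colon_span_singleton.mpr (by rw [smul_eq_mul]; exact hX0f)
      · exact Submodule.mem_colon_span_singleton.mpr (by rw [smul_eq_mul]; exact hX1f)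
  have hass : Ideal.span {(X 0 : MvPolynomial (Fin 2) K), X 1}
      ∈ associatedPrimes (MvPolynomial (Fin 2) K)
        (MvPolynomial (Fin 2) K ⧸ I ^ (k'+1)) := by
    refine ⟨mySpanXPrime, Ideal.Quotient.mk _ f₀, ?_⟩
    rw [Submodule.bot_colon', ← myColonAnn, hcolon, mySpanXPrime.radical]
  have hf₀hom : f₀.IsHomogeneous ((2*b'+3) * (k'+1)) := by
    rw [hf₀def]
    apply isHomogeneous_monomial
    have hdeg2 : ∀ u : Fin 2 →₀ ℕ, u.degree = u 0 + u 1 := by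
      intro u
      rw [Finsupp.degree_apply, Finset.sum_subset (Finset.subset_univ _)
        (fun i _ hi => Finsupp.notMem_support_iff.mp hi), Fin.sum_univ_two]
    rw [hdeg2, hm₀0, hm₀1]
    ring
  have hmem : (2*b'+3) * (k'+1) ∈ {d | ∃ p ∈ associatedPrimes (MvPolynomial (Fin 2) K)
      (MvPolynomial (Fin 2) K ⧸ I ^ (k'+1)),
      ∃ f : MvPolynomial (Fin 2) K, f.IsHomogeneous d ∧
        Submodule.colon (I ^ (k'+1)) (Ideal.span {f}) = p} :=
    ⟨_, hass, f₀, hf₀hom, hcolon⟩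
  have hlower : ∀ d ∈ {d | ∃ p ∈ associatedPrimes (MvPolynomial (Fin 2) K)
      (MvPolynomial (Fin 2) K ⧸ I ^ (k'+1)),
      ∃ f : MvPolynomial (Fin 2) K, f.IsHomogeneous d ∧
        Submodule.colon (I ^ (k'+1)) (Ideal.span {f}) = p},
      (2*b'+3) * (k'+1) ≤ d := by
    rintro d ⟨p, hp, f, hfhom, hcol⟩
    have hp' : IsAssociatedPrime p (MvPolynomial (Fin 2) K ⧸ I ^ (k'+1)) := hp
    have hpr : p.IsPrime := hp'.isPrime
    have hfne : f ≠ 0 := by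
      rintro rfl
      apply hpr.ne_top
      rw [← hcol, eq_top_iff]
      intro r _
      exact Submodule.mem_colon_span_singleton.mpr (by rw [smul_zero]; exact Submodule.zero_mem _)
    have hIp : I ^ (k'+1) ≤ p := by
      rw [← hcol]
      intro i hi
      exact Submodule.mem_colon_span_singleton.mpr (by rw [smul_eq_mul]; exact Ideal.mul_mem_right _ _ hi)
    have hX0p : X 0 ∈ p := by
      refine hpr.mem_of_pow_mem ((2*b'+3)*(k'+1)) (hIp ?_)
      rw [pow_mul]
      exact Ideal.pow_mem_pow hg1 _
    have hX1p : X 1 ∈ p := by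
      refine hpr.mem_of_pow_mem ((2*b'+3)*(k'+1)) (hIp ?_)
      rw [pow_mul]
      exact Ideal.pow_mem_pow hg3 _
    rw [← hcol] at hX0p hX1p
    have hX0f : X 0 * f ∈ I ^ (k'+1) := by
      have := Submodule.mem_colon_span_singleton.mp hX0p
      rwa [smul_eq_mul] at this
    have hX1f : X 1 * f ∈ I ^ (k'+1) := by
      have := Submodule.mem_colon_span_singleton.mp hX1p
      rwa [smul_eq_mul] at this
    obtain ⟨m, hm⟩ : f.support.Nonempty := by
      rw [Finset.nonempty_iff_ne_empty]
      intro h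
      exact hfne (support_eq_empty.mp h)
    have hdeg : m 0 + m 1 = d := by
      have hw := hfhom (mem_support_iff.mp hm)
      rw [← hw]
      simp [Finsupp.weight_apply, Finsupp.sum_fintype, Fin.sum_univ_two]
    have hc1 : coeff (Finsupp.single 0 1 + m) (X 0 * f) ≠ 0 := by
      rw [coeff_X_mul]; exact mem_support_iff.mp hm
    have hc2 : coeff (Finsupp.single 1 1 + m) (X 1 * f) ≠ 0 := by
      rw [coeff_X_mul]; exact mem_support_iff.mp hm
    obtain ⟨a, c, e, h0, h1, h2⟩ :=
      hPow (k'+1) hX0f _ (mem_support_iff.mpr hc1)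
    obtain ⟨a2, c2, e2, h0', h1', h2'⟩ :=
      hPow (k'+1) hX1f _ (mem_support_iff.mpr hc2)
    have ea : ((Finsupp.single (0:Fin 2) 1 + m : Fin 2 →₀ ℕ)) 0 = m 0 + 1 := by simp; omega
    have eb : ((Finsupp.single (0:Fin 2) 1 + m : Fin 2 →₀ ℕ)) 1 = m 1 := by
      simp [Finsupp.single_apply]
    have ec : ((Finsupp.single (1:Fin 2) 1 + m : Fin 2 →₀ ℕ)) 0 = m 0 := by
      simp [Finsupp.single_apply]
    have ed : ((Finsupp.single (1:Fin 2) 1 + m : Fin 2 →₀ ℕ)) 1 = m 1 + 1 := by simp; omega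
    rw [ea] at h1
    rw [eb] at h2
    rw [ec] at h1'
    rw [ed] at h2'
    by_contra hlt
    push_neg at hlt
    have key : ((2*b'+3)*a + 2*c) + ((2*b'+1)*c + (2*b'+3)*e) = (2*b'+3)*(k'+1) := by
      rw [← h0]; ring
    have key2 : ((2*b'+3)*a2 + 2*c2) + ((2*b'+1)*c2 + (2*b'+3)*e2) = (2*b'+3)*(k'+1) := by
      rw [← h0']; ring
    have heq : (2*b'+3)*a + 2*c = (2*b'+3)*a2 + 2*c2 + 1 := by
      generalize (2*b'+3)*a = A at key h1 ⊢
      generalize (2*b'+3)*a2 = A2 at key2 h1' ⊢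
      generalize (2*b'+1)*c = P at key h2
      generalize (2*b'+3)*e = Q at key h2
      generalize (2*b'+1)*c2 = P2 at key2 h2'
      generalize (2*b'+3)*e2 = Q2 at key2 h2'
      generalize (2*b'+3)*(k'+1) = DD at key key2 hlt
      omega
    exact myGap b' k' hk h0 h0' heq
  simp only [vnum]
  exact le_antisymm (Nat.sInf_le hmem) (le_csInf ⟨_, hmem⟩ hlower)
end

section
/- Let K be a field, S = K[x,y], b ≥ 1 an integer, and I = (x^{2b+1}, x^2 y^{2b-1}, y^{2b+1}) ⊆ S. Then v(I^k) = (2b+1)k - 1 for every integer k ≥ b. -/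
open MvPolynomial

section Aux
variable {K : Type*} [Field K]

/-- The ideal of polynomials all of whose monomials have degree at least `d`. -/
def lowDeg (n : ℕ) (K : Type*) [Field K] (d : ℕ) : Ideal (MvPolynomial (Fin n) K) where
  carrier := {f | ∀ μ ∈ f.support, d ≤ μ.degree}
  add_mem' := by
    classical
    intro a b ha hb μ hμ
    rcases Finset.mem_union.1 (MvPolynomial.support_add hμ) with h | h
    exacts [ha μ h, hb μ h]
  zero_mem' := by simp
  smul_mem' := by
    classical
    intro c f hf μ hμ
    rw [smul_eq_mul] at hμ
    obtain ⟨ν, hν, ρ, hρ, rfl⟩ := Finset.mem_add.1 (MvPolynomial.support_mul c f hμ)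
    have : Finsupp.degree (ν + ρ) = ν.degree + ρ.degree := by
      simp [Finsupp.degree_eq_weight_one, map_add]
    have := hf ρ hρ
    omega

lemma mem_lowDeg_iff {n d : ℕ} {f : MvPolynomial (Fin n) K} :
    f ∈ lowDeg n K d ↔ ∀ μ ∈ f.support, d ≤ μ.degree := Iff.rfl

lemma lowDeg_mul_le {n a b : ℕ} :
    lowDeg n K a * lowDeg n K b ≤ lowDeg n K (a + b) := by
  classical
  rw [Ideal.mul_le]
  intro r hr s hs μ hμ
  obtain ⟨ν, hν, ρ, hρ, rfl⟩ := Finset.mem_add.1 (MvPolynomial.support_mul r s hμ)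
  have : Finsupp.degree (ν + ρ) = ν.degree + ρ.degree := by
    simp [Finsupp.degree_eq_weight_one, map_add]
  have h1 := hr ν hν
  have h2 := hs ρ hρ
  omega

lemma pow_le_lowDeg {n d k : ℕ} {I : Ideal (MvPolynomial (Fin n) K)}
    (h : I ≤ lowDeg n K d) : I ^ k ≤ lowDeg n K (d * k) := by
  induction k with
  | zero => intro f _ μ _; omega
  | succ k ih =>
      rw [pow_succ]
      calc I ^ k * I ≤ lowDeg n K (d * k) * lowDeg n K d := Ideal.mul_mono ih h
        _ ≤ lowDeg n K (d * k + d) := lowDeg_mul_le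
        _ = lowDeg n K (d * (k + 1)) := by ring_nf

lemma mem_pow_of_prod {R : Type*} [CommRing R] {I : Ideal R} {g1 g2 : R}
    (h1 : g1 ∈ I) (h2 : g2 ∈ I) (s t k : ℕ) (h : s + t = k) :
    g1 ^ s * g2 ^ t ∈ I ^ k := by
  subst h
  rw [pow_add]
  exact Ideal.mul_mem_mul (Ideal.pow_mem_pow h1 _) (Ideal.pow_mem_pow h2 _)

lemma degree_single (i : Fin 2) (a : ℕ) : Finsupp.degree (Finsupp.single i a) = a := by
  simp [Finsupp.degree_eq_weight_one, Finsupp.weight_apply, Finsupp.sum_single_index]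

lemma mem_span_XX_iff {g : MvPolynomial (Fin 2) K} :
    g ∈ Ideal.span {(X 0 : MvPolynomial (Fin 2) K), X 1} ↔ constantCoeff g = 0 := by
  have himg : (MvPolynomial.X '' (Set.univ : Set (Fin 2)) : Set (MvPolynomial (Fin 2) K))
      = {X 0, X 1} := by
    ext f
    constructor
    · rintro ⟨i, -, rfl⟩
      fin_cases i <;> simp
    · rintro (rfl | rfl)
      exacts [⟨0, trivial, rfl⟩, ⟨1, trivial, rfl⟩]
  rw [← himg, mem_ideal_span_X_image]
  constructor
  · intro h
    by_contra hc
    have h0 : (0 : Fin 2 →₀ ℕ) ∈ g.support := by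
      rw [mem_support_iff]
      simpa [constantCoeff_eq] using hc
    obtain ⟨i, -, hi⟩ := h 0 h0
    simp at hi
  · intro h μ hμ
    by_contra hc
    push_neg at hc
    have : μ = 0 := by
      ext i
      simpa using hc i (Set.mem_univ i)
    rw [this, mem_support_iff] at hμ
    exact hμ (by simpa [constantCoeff_eq] using h)

lemma span_XX_eq_ker :
    Ideal.span {(X 0 : MvPolynomial (Fin 2) K), X 1}
      = RingHom.ker (constantCoeff : MvPolynomial (Fin 2) K →+* K) := by
  ext g
  rw [mem_span_XX_iff, RingHom.mem_ker]

lemma span_XX_isMaximal :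
    (Ideal.span {(X 0 : MvPolynomial (Fin 2) K), X 1}).IsMaximal := by
  rw [span_XX_eq_ker]
  exact RingHom.ker_isMaximal_of_surjective _ (fun r => ⟨C r, by simp⟩)

end Aux

section Key
variable {K : Type*} [Field K]


lemma ann_mk_eq_colon {R : Type*} [CommRing R] (I : Ideal R) (f : R) :
    (Submodule.span R {(Ideal.Quotient.mk I f : R ⧸ I)}).annihilator
      = Submodule.colon I (Ideal.span {f}) := by
  ext g
  rw [Submodule.mem_annihilator_span_singleton, Ideal.mem_colon_span_singleton,
    ← Ideal.Quotient.mk_eq_mk, ← Submodule.Quotient.mk_smul, smul_eq_mul,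
    Ideal.Quotient.mk_eq_mk, Ideal.Quotient.eq_zero_iff_mem]

lemma key_vnum (I : Ideal (MvPolynomial (Fin 2) K)) (D a c : ℕ)
    (hD : 1 ≤ D)
    (hac : a + c + 1 = D)
    (hlow : I ≤ lowDeg 2 K D)
    (hx : X 0 ^ (a + 1) * X 1 ^ c ∈ I)
    (hy : X 0 ^ a * X 1 ^ (c + 1) ∈ I)
    (hX0 : ∃ N, X 0 ^ N ∈ I) (hX1 : ∃ N, X 1 ^ N ∈ I) :
    vnum I = D - 1 := by
  classical
  set m : Ideal (MvPolynomial (Fin 2) K) := Ideal.span {X 0, X 1} with hm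
  have hmmax : m.IsMaximal := span_XX_isMaximal
  have hmprime : m.IsPrime := hmmax.isPrime
  set f : MvPolynomial (Fin 2) K := X 0 ^ a * X 1 ^ c with hf
  set μf : Fin 2 →₀ ℕ := Finsupp.single 0 a + Finsupp.single 1 c with hμf
  have hfmon : f = monomial μf 1 := by
    rw [hf, X_pow_eq_monomial, X_pow_eq_monomial, monomial_mul, one_mul]
  have hμfdeg : μf.degree = a + c := by
    have hadd : Finsupp.degree ((Finsupp.single (0 : Fin 2) a) + Finsupp.single 1 c)
        = Finsupp.degree (Finsupp.single (0 : Fin 2) a)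
          + Finsupp.degree (Finsupp.single (1 : Fin 2) c) := by
      simp [Finsupp.degree_eq_weight_one, map_add]
    rw [hμf, hadd, degree_single, degree_single]
  -- f ∉ I
  have hfnI : f ∉ I := by
    intro hmem
    have := hlow hmem μf (by
      rw [hfmon, mem_support_iff, coeff_monomial, if_pos rfl]
      exact one_ne_zero)
    omega
  -- colon computation
  have hcolon : Submodule.colon I (Ideal.span {f}) = m := by
    ext g
    rw [Ideal.mem_colon_span_singleton]
    constructor
    · intro hgf
      rw [hm, mem_span_XX_iff]
      by_contra hc
      have hco : coeff μf (g * f) = constantCoeff g := by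
        rw [hfmon]
        have := coeff_mul_monomial 0 μf (1 : K) g
        rw [zero_add] at this
        rw [this, mul_one, constantCoeff_eq]
      have hsup : μf ∈ (g * f).support := by
        rw [mem_support_iff, hco]; exact hc
      have := hlow hgf μf hsup
      omega
    · intro hg
      obtain ⟨u, v, rfl⟩ := Ideal.mem_span_pair.1 hg
      have hrw : (u * X 0 + v * X 1) * f
          = u * (X 0 ^ (a + 1) * X 1 ^ c) + v * (X 0 ^ a * X 1 ^ (c + 1)) := by
        rw [hf]; ring
      rw [hrw]
      exact I.add_mem (I.mul_mem_left u hx) (I.mul_mem_left v hy)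
  -- m is an associated prime
  have hass : m ∈ associatedPrimes (MvPolynomial (Fin 2) K) (MvPolynomial (Fin 2) K ⧸ I) :=
    isAssociatedPrime_iff.2 ⟨hmprime, ⟨Ideal.Quotient.mk I f, by
      rw [← hcolon, ← ann_mk_eq_colon]; ext g
      rw [Submodule.mem_colon_singleton, Submodule.mem_bot,
        Submodule.mem_annihilator_span_singleton]⟩⟩
  have hfhom : f.IsHomogeneous (D - 1) := by
    have := (isHomogeneous_X_pow (R := K) (0 : Fin 2) a).mul (isHomogeneous_X_pow 1 c)
    rw [hf]
    convert this using 1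
    omega
  -- membership of D - 1
  have hmem : D - 1 ∈ {d | ∃ p ∈ associatedPrimes (MvPolynomial (Fin 2) K)
      (MvPolynomial (Fin 2) K ⧸ I),
      ∃ f : MvPolynomial (Fin 2) K, f.IsHomogeneous d ∧
        Submodule.colon I (Ideal.span {f}) = p} := ⟨m, hass, f, hfhom, hcolon⟩
  refine le_antisymm (Nat.sInf_le hmem) (le_csInf ⟨_, hmem⟩ ?_)
  rintro d ⟨p, hp, f', hf', hcolon'⟩
  obtain ⟨hpprime, x, hpann⟩ := isAssociatedPrime_iff.1 hp
  -- I ≤ p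
  have hIp : I ≤ p := by
    intro g hg
    rw [hpann, Submodule.mem_colon_singleton, Submodule.mem_bot]
    obtain ⟨y, rfl⟩ := Submodule.Quotient.mk_surjective _ x
    rw [← Submodule.Quotient.mk_smul, smul_eq_mul]
    exact (Submodule.Quotient.mk_eq_zero _).2 (I.mul_mem_right y hg)
  obtain ⟨N0, hN0⟩ := hX0
  obtain ⟨N1, hN1⟩ := hX1
  have hX0p : (X 0 : MvPolynomial (Fin 2) K) ∈ p := hpprime.mem_of_pow_mem _ (hIp hN0)
  have hX1p : (X 1 : MvPolynomial (Fin 2) K) ∈ p := hpprime.mem_of_pow_mem _ (hIp hN1)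
  have hmp : m ≤ p := by
    rw [hm, Ideal.span_le]
    rintro g (rfl | rfl) <;> assumption
  have hpm : p = m := (hmmax.eq_of_le hpprime.ne_top hmp).symm
  rw [hpm] at hcolon'
  -- f' ∉ I
  have hf'nI : f' ∉ I := by
    intro hmem
    have h1 : (1 : MvPolynomial (Fin 2) K) ∈ m := by
      rw [← hcolon', Ideal.mem_colon_span_singleton, one_mul]; exact hmem
    exact hmprime.ne_top ((Ideal.eq_top_iff_one _).2 h1)
  have hf'0 : f' ≠ 0 := by rintro rfl; exact hf'nI I.zero_mem
  -- X 0 * f' ∈ I, nonzero, homogeneous of degree d + 1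
  have hx0f : X 0 * f' ∈ I := by
    rw [← Ideal.mem_colon_span_singleton (I := I) (x := f'), hcolon', hm]
    exact Ideal.subset_span (by left; rfl)
  have hne : (X 0 * f' : MvPolynomial (Fin 2) K) ≠ 0 :=
    mul_ne_zero (X_ne_zero 0) hf'0
  obtain ⟨μ, hμ⟩ := support_nonempty.2 hne
  have hdegμ : μ.degree = 1 + d := by
    have hh := ((isHomogeneous_X K (0 : Fin 2)).mul hf') (mem_support_iff.1 hμ)
    rw [Finsupp.degree_eq_weight_one]
    exact hh
  have hDle : D ≤ μ.degree := hlow hx0f μ hμ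
  omega

end Key

lemma monomial_mem_lowDeg {K : Type*} [Field K] {n dd : ℕ} (μ : Fin n →₀ ℕ)
    (hdeg : dd ≤ μ.degree) : (monomial μ (1 : K)) ∈ lowDeg n K dd := by
  classical
  intro ν hν
  rw [support_monomial, if_neg one_ne_zero, Finset.mem_singleton] at hν
  subst hν; exact hdeg

lemma degree_add' {n : ℕ} (x y : Fin n →₀ ℕ) :
    Finsupp.degree (x + y) = x.degree + y.degree := by
  simp [Finsupp.degree_eq_weight_one, map_add]

/-- For `S = K[x,y]`, `b ≥ 1` and
`I = (x^{2b+1}, x^2 y^{2b-1}, y^{2b+1})`, one has `v(I^k) = (2b+1)k - 1` for `k ≥ b`. -/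
theorem vnum_pow_of_ge (K : Type*) [Field K] (b : ℕ) (hb : 1 ≤ b)
    (I : Ideal (MvPolynomial (Fin 2) K))
    (hI : I = Ideal.span {X 0 ^ (2*b+1), X 0 ^ 2 * X 1 ^ (2*b-1), X 1 ^ (2*b+1)})
    (k : ℕ) (hk : b ≤ k) :
    vnum (I ^ k) = (2*b+1) * k - 1 := by
  obtain ⟨s, rfl⟩ : ∃ s, b = s + 1 := ⟨b - 1, by omega⟩
  obtain ⟨t, rfl⟩ : ∃ t, k = (s + 1) + t := ⟨k - (s + 1), by omega⟩
  have h2b1 : 2 * (s + 1) + 1 = 2 * s + 3 := by ring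
  have h2bm1 : 2 * (s + 1) - 1 = 2 * s + 1 := by omega
  rw [h2b1, h2bm1] at hI
  have hg1 : (X 0 : MvPolynomial (Fin 2) K) ^ (2*s+3) ∈ I := by
    rw [hI]; exact Ideal.subset_span (by left; rfl)
  have hg2 : (X 0 : MvPolynomial (Fin 2) K) ^ 2 * X 1 ^ (2*s+1) ∈ I := by
    rw [hI]; exact Ideal.subset_span (by right; left; rfl)
  have hg3 : (X 1 : MvPolynomial (Fin 2) K) ^ (2*s+3) ∈ I := by
    rw [hI]; exact Ideal.subset_span (by right; right; rfl)
  set D := (2*s+3) * (s+1+t) with hD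
  set a := (2*s+3)*t + 2*s + 2 with ha
  set c := (2*s+3)*s with hc
  have h1 : 1 ≤ D := by
    rw [hD]; exact Nat.one_le_iff_ne_zero.2 (Nat.mul_ne_zero (by omega) (by omega))
  have h2 : a + c + 1 = D := by rw [ha, hc, hD]; ring
  have h3 : I ^ (s + 1 + t) ≤ lowDeg 2 K D := by
    have hIlow : I ≤ lowDeg 2 K (2*s+3) := by
      rw [hI, Ideal.span_le]
      rintro g (rfl | rfl | rfl)
      · rw [X_pow_eq_monomial]
        exact monomial_mem_lowDeg _ (by rw [degree_single])
      · rw [X_pow_eq_monomial, X_pow_eq_monomial, monomial_mul, one_mul]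
        refine monomial_mem_lowDeg _ ?_
        rw [degree_add', degree_single, degree_single]
        omega
      · rw [X_pow_eq_monomial]
        exact monomial_mem_lowDeg _ (by rw [degree_single])
    have := pow_le_lowDeg (k := s + 1 + t) hIlow
    rwa [hD]
  have h4 : X 0 ^ (a + 1) * X 1 ^ c ∈ I ^ (s + 1 + t) := by
    have e1 : a + 1 = (2*s+3) * (t+1) := by rw [ha]; ring
    rw [e1, hc, pow_mul, pow_mul]
    exact mem_pow_of_prod hg1 hg3 (t+1) s _ (by omega)
  have h5 : X 0 ^ a * X 1 ^ (c + 1) ∈ I ^ (s + 1 + t) := by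
    have e : (X 0 : MvPolynomial (Fin 2) K) ^ a * X 1 ^ (c + 1)
        = (X 0 ^ (2*s+3)) ^ t * (X 0 ^ 2 * X 1 ^ (2*s+1)) ^ (s+1) := by
      rw [ha, hc]; ring
    rw [e]
    exact mem_pow_of_prod hg1 hg2 t (s+1) _ (by omega)
  have h6 : ∃ N, (X 0 : MvPolynomial (Fin 2) K) ^ N ∈ I ^ (s + 1 + t) :=
    ⟨(2*s+3) * (s+1+t), by rw [pow_mul]; exact Ideal.pow_mem_pow hg1 _⟩
  have h7 : ∃ N, (X 1 : MvPolynomial (Fin 2) K) ^ N ∈ I ^ (s + 1 + t) :=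
    ⟨(2*s+3) * (s+1+t), by rw [pow_mul]; exact Ideal.pow_mem_pow hg3 _⟩
  have hkey := key_vnum (I ^ (s + 1 + t)) D a c h1 h2 h3 h4 h5 h6 h7
  rw [hkey]
  congr 1
end

section
/- Let K be a field, S = K[x,y], b ≥ 1 an integer, and I = (x^{2b+1}, x^2 y^{2b-1}, y^{2b+1}) ⊆ S. Then astab(I) = 1 and vstab(I) = b. -/
open MvPolynomial Pointwise

namespace VProof
noncomputable def ee (a c : ℕ) : Fin 2 →₀ ℕ := Finsupp.single 0 a + Finsupp.single 1 c

@[simp] lemma ee_apply0 (a c : ℕ) : ee a c 0 = a := by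
  simp [ee, Finsupp.single_apply]

@[simp] lemma ee_apply1 (a c : ℕ) : ee a c 1 = c := by
  simp [ee, Finsupp.single_apply]

lemma ee_add (a c a' c' : ℕ) : ee a c + ee a' c' = ee (a + a') (c + c') := by
  ext i; fin_cases i <;> simp

lemma eq_ee (d : Fin 2 →₀ ℕ) : d = ee (d 0) (d 1) := by
  ext i; fin_cases i <;> simp

lemma ee_le_iff (a c : ℕ) (d : Fin 2 →₀ ℕ) : ee a c ≤ d ↔ a ≤ d 0 ∧ c ≤ d 1 := by
  rw [Finsupp.le_def, Fin.forall_fin_two]; simp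

lemma degree_eq (d : Fin 2 →₀ ℕ) : d.degree = d 0 + d 1 := by
  rw [Finsupp.degree_eq_sum]
  rw [Fin.sum_univ_two]

lemma ee_degree (a c : ℕ) : (ee a c).degree = a + c := by rw [degree_eq]; simp

/-- exponent set of generators of I^k -/
def Sk (b k : ℕ) : Set (Fin 2 →₀ ℕ) :=
  {s | ∃ i j l, i + j + l = k ∧ s = ee ((2*b+1)*i + 2*j) ((2*b-1)*j + (2*b+1)*l)}

lemma add_mem_Sk {b k k' : ℕ} {s t : Fin 2 →₀ ℕ} (hs : s ∈ Sk b k) (ht : t ∈ Sk b k') :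
    s + t ∈ Sk b (k + k') := by
  obtain ⟨i, j, l, h, rfl⟩ := hs
  obtain ⟨i', j', l', h', rfl⟩ := ht
  exact ⟨i + i', j + j', l + l', by omega, by rw [ee_add]; congr 1 <;> ring⟩

lemma Sk_succ_decomp {b k : ℕ} {s : Fin 2 →₀ ℕ} (hs : s ∈ Sk b (k + 1)) :
    ∃ t ∈ Sk b k, ∃ g ∈ Sk b 1, s = t + g := by
  obtain ⟨i, j, l, h, rfl⟩ := hs
  rcases i with _ | i
  · rcases j with _ | j
    · rcases l with _ | l
      · omega
      · exact ⟨_, ⟨0, 0, l, by omega, rfl⟩, _, ⟨0, 0, 1, by omega, rfl⟩,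
          by rw [ee_add]; congr 1 <;> ring⟩
    · exact ⟨_, ⟨0, j, l, by omega, rfl⟩, _, ⟨0, 1, 0, by omega, rfl⟩,
        by rw [ee_add]; congr 1 <;> ring⟩
  · exact ⟨_, ⟨i, j, l, by omega, rfl⟩, _, ⟨1, 0, 0, by omega, rfl⟩,
      by rw [ee_add]; congr 1 <;> ring⟩

variable (K : Type*) [Field K]

lemma ee_congr {a c a' c' : ℕ} (h1 : a = a') (h2 : c = c') : ee a c = ee a' c' := by
  subst h1 h2; rfl

lemma span_S1 (b : ℕ) :
    Ideal.span {(X 0 : MvPolynomial (Fin 2) K) ^ (2*b+1), X 0 ^ 2 * X 1 ^ (2*b-1), X 1 ^ (2*b+1)}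
      = Ideal.span ((fun s => monomial s (1 : K)) '' Sk b 1) := by
  have h1 : Sk b 1 = {ee (2*b+1) 0, ee 2 (2*b-1), ee 0 (2*b+1)} := by
    ext s
    constructor
    · rintro ⟨i, j, l, h, rfl⟩
      have hc : (i = 1 ∧ j = 0 ∧ l = 0) ∨ (i = 0 ∧ j = 1 ∧ l = 0) ∨ (i = 0 ∧ j = 0 ∧ l = 1) := by
        omega
      rcases hc with ⟨rfl, rfl, rfl⟩ | ⟨rfl, rfl, rfl⟩ | ⟨rfl, rfl, rfl⟩
      · exact .inl (ee_congr (by ring) (by ring))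
      · exact .inr (.inl (ee_congr (by ring) (by ring)))
      · exact .inr (.inr (ee_congr (by ring) (by ring)))
    · rintro (rfl | rfl | rfl)
      · exact ⟨1, 0, 0, by omega, ee_congr (by ring) (by ring)⟩
      · exact ⟨0, 1, 0, by omega, ee_congr (by ring) (by ring)⟩
      · exact ⟨0, 0, 1, by omega, ee_congr (by ring) (by ring)⟩
  rw [h1]
  congr 1
  rw [Set.image_insert_eq, Set.image_insert_eq, Set.image_singleton]
  have s0 : ee (2*b+1) 0 = Finsupp.single 0 (2*b+1) := by
    ext i; fin_cases i <;> simp [ee, Finsupp.single_apply]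
  have s2 : ee 0 (2*b+1) = Finsupp.single 1 (2*b+1) := by
    ext i; fin_cases i <;> simp [ee, Finsupp.single_apply]
  have s1 : ee 2 (2*b-1) = Finsupp.single 0 2 + Finsupp.single 1 (2*b-1) := rfl
  have e0 : (monomial (ee (2*b+1) 0) (1 : K)) = X 0 ^ (2*b+1) := by
    rw [s0, X_pow_eq_monomial]
  have e2 : (monomial (ee 0 (2*b+1)) (1 : K)) = X 1 ^ (2*b+1) := by
    rw [s2, X_pow_eq_monomial]
  have e1 : (monomial (ee 2 (2*b-1)) (1 : K)) = X 0 ^ 2 * X 1 ^ (2*b-1) := by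
    rw [s1, X_pow_eq_monomial, X_pow_eq_monomial, monomial_mul, one_mul]
  rw [e0, e1, e2]

lemma pow_eq_span (b k : ℕ) :
    (Ideal.span {(X 0 : MvPolynomial (Fin 2) K) ^ (2*b+1), X 0 ^ 2 * X 1 ^ (2*b-1),
      X 1 ^ (2*b+1)}) ^ k = Ideal.span ((fun s => monomial s (1 : K)) '' Sk b k) := by
  induction k with
  | zero =>
    rw [pow_zero]
    have h0 : Sk b 0 = {0} := by
      ext s
      constructor
      · rintro ⟨i, j, l, h, rfl⟩
        have hi : i = 0 := by omega
        have hj : j = 0 := by omega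
        have hl : l = 0 := by omega
        subst hi hj hl
        simp only [Set.mem_singleton_iff]
        ext t; fin_cases t <;> simp
      · rintro rfl
        exact ⟨0, 0, 0, by omega, by ext t; fin_cases t <;> simp⟩
    rw [h0, Set.image_singleton, monomial_zero', C_1, Ideal.span_singleton_one, Ideal.one_eq_top]
  | succ k ih =>
    rw [pow_succ, ih, span_S1 K b, Ideal.span_mul_span']
    apply le_antisymm
    · rw [Ideal.span_le]
      rintro z hz
      rw [Set.mem_mul] at hz
      obtain ⟨x, hx, y, hy, rfl⟩ := hz
      obtain ⟨s, hs, rfl⟩ := hx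
      obtain ⟨t, ht, rfl⟩ := hy
      simp only [monomial_mul, one_mul]
      exact Ideal.subset_span ⟨s + t, add_mem_Sk hs ht, rfl⟩
    · rw [Ideal.span_le]
      rintro z ⟨s, hs, rfl⟩
      obtain ⟨t, ht, g, hg, rfl⟩ := Sk_succ_decomp hs
      show (monomial (t + g)) (1 : K) ∈ _
      have hmem : monomial t (1 : K) * monomial g 1 ∈
          Ideal.span ((fun s => monomial s (1 : K)) '' Sk b k *
            (fun s => monomial s (1 : K)) '' Sk b 1) :=
        Ideal.subset_span (Set.mul_mem_mul ⟨t, ht, rfl⟩ ⟨g, hg, rfl⟩)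
      rwa [monomial_mul, one_mul] at hmem

lemma mem_pow_iff (b k : ℕ) (f : MvPolynomial (Fin 2) K) :
    f ∈ (Ideal.span {(X 0 : MvPolynomial (Fin 2) K) ^ (2*b+1), X 0 ^ 2 * X 1 ^ (2*b-1),
      X 1 ^ (2*b+1)}) ^ k ↔
    ∀ d ∈ f.support, ∃ i j l, i + j + l = k ∧
      (2*b+1)*i + 2*j ≤ d 0 ∧ (2*b-1)*j + (2*b+1)*l ≤ d 1 := by
  rw [pow_eq_span, mem_ideal_span_monomial_image]
  apply forall₂_congr
  intro d _
  constructor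
  · rintro ⟨s, ⟨i, j, l, h, rfl⟩, hle⟩
    rw [ee_le_iff] at hle
    exact ⟨i, j, l, h, hle.1, hle.2⟩
  · rintro ⟨i, j, l, h, h0, h1⟩
    exact ⟨_, ⟨i, j, l, h, rfl⟩, (ee_le_iff _ _ _).mpr ⟨h0, h1⟩⟩

lemma mono_mem_pow_iff (b k a c : ℕ) :
    (monomial (ee a c) (1 : K)) ∈ (Ideal.span {(X 0 : MvPolynomial (Fin 2) K) ^ (2*b+1),
      X 0 ^ 2 * X 1 ^ (2*b-1), X 1 ^ (2*b+1)}) ^ k ↔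
    ∃ i j l, i + j + l = k ∧ (2*b+1)*i + 2*j ≤ a ∧ (2*b-1)*j + (2*b+1)*l ≤ c := by
  classical
  rw [mem_pow_iff, support_monomial]
  simp [if_neg (one_ne_zero' K)]


section MaxIdeal
variable (K : Type*) [Field K]

/-- the maximal ideal (X 0, X 1) -/
noncomputable def mm : Ideal (MvPolynomial (Fin 2) K) := Ideal.span {X 0, X 1}

lemma range_X_eq : ({X 0, X 1} : Set (MvPolynomial (Fin 2) K)) = Set.range X := by
  ext p
  constructor
  · rintro (rfl | rfl)
    exacts [⟨0, rfl⟩, ⟨1, rfl⟩]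
  · rintro ⟨i, rfl⟩
    fin_cases i
    · exact Or.inl rfl
    · exact Or.inr rfl

lemma mm_eq_ker : mm K = RingHom.ker (constantCoeff : MvPolynomial (Fin 2) K →+* K) := by
  apply le_antisymm
  · rw [mm, Ideal.span_le]
    rintro p (rfl | rfl) <;> simp [RingHom.mem_ker]
  · intro f hf
    rw [RingHom.mem_ker, constantCoeff_eq] at hf
    rw [mm, range_X_eq, ← Set.image_univ]
    rw [mem_ideal_span_X_image]
    intro m hm
    by_contra hc
    push_neg at hc
    have hm0 : m = 0 := by
      ext i; exact hc i (Set.mem_univ i)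
    rw [MvPolynomial.mem_support_iff, hm0, hf] at hm
    exact hm rfl

lemma mm_isMaximal : (mm K).IsMaximal := by
  rw [mm_eq_ker]
  exact RingHom.ker_isMaximal_of_surjective _ (fun a => ⟨C a, by simp⟩)

lemma mm_ne_top : mm K ≠ ⊤ := (mm_isMaximal K).ne_top

variable (b : ℕ)

/-- the ideal I -/
noncomputable def II : Ideal (MvPolynomial (Fin 2) K) :=
  Ideal.span {X 0 ^ (2*b+1), X 0 ^ 2 * X 1 ^ (2*b-1), X 1 ^ (2*b+1)}

lemma II_le_mm : II K b ≤ mm K := by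
  rw [II, Ideal.span_le]
  have h0 : (X 0 : MvPolynomial (Fin 2) K) ∈ mm K :=
    Ideal.subset_span (Or.inl rfl)
  have h1 : (X 1 : MvPolynomial (Fin 2) K) ∈ mm K :=
    Ideal.subset_span (Or.inr rfl)
  rintro p (rfl | rfl | rfl)
  · exact Ideal.pow_mem_of_mem _ h0 _ (by omega)
  · exact Ideal.mul_mem_right _ _ (Ideal.pow_mem_of_mem _ h0 _ (by omega))
  · exact Ideal.pow_mem_of_mem _ h1 _ (by omega)

lemma radical_II : (II K b).radical = mm K := by
  apply le_antisymm
  · exact ((mm_isMaximal K).isPrime.radical_le_iff).mpr (II_le_mm K b)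
  · rw [mm, Ideal.span_le]
    rintro p (rfl | rfl)
    · exact ⟨2*b+1, Ideal.subset_span (Or.inl rfl)⟩
    · exact ⟨2*b+1, Ideal.subset_span (Or.inr (Or.inr rfl))⟩

lemma ass_II_pow (k : ℕ) (hk : 1 ≤ k) :
    associatedPrimes (MvPolynomial (Fin 2) K) (MvPolynomial (Fin 2) K ⧸ (II K b) ^ k)
      = {mm K} := by
  have hrad : ((II K b) ^ k).radical = mm K := by
    have h := Ideal.radical_pow (I := II K b) (n := k) (show k ≠ 0 by omega)
    rw [h, radical_II]
  rw [associatedPrimes.eq_singleton_of_isPrimary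
    (Ideal.isPrimary_of_isMaximal_radical (hrad ▸ mm_isMaximal K)), hrad]

end MaxIdeal

-- sum identity
lemma sum_id (b i j l : ℕ) (hb : 1 ≤ b) :
    ((2*b+1)*i + 2*j) + ((2*b-1)*j + (2*b+1)*l) = (2*b+1)*(i+j+l) := by
  obtain ⟨β, rfl⟩ : ∃ β, b = β + 1 := ⟨b - 1, by omega⟩
  have h : 2*(β+1)-1 = 2*β+1 := by omega
  rw [h]; ring

-- general lower bound: from X0·u ∈ I^k triple
lemma gen_lower (b k u0 u1 i j l : ℕ) (hb : 1 ≤ b) (hk : i + j + l = k)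
    (h1 : (2*b+1)*i + 2*j ≤ u0 + 1) (h2 : (2*b-1)*j + (2*b+1)*l ≤ u1) :
    (2*b+1)*k ≤ u0 + u1 + 1 := by
  calc (2*b+1)*k = ((2*b+1)*i + 2*j) + ((2*b-1)*j + (2*b+1)*l) := by
        rw [sum_id _ _ _ _ hb, hk]
    _ ≤ (u0 + 1) + u1 := Nat.add_le_add h1 h2
    _ = u0 + u1 + 1 := by ring

-- no two consecutive values in F_k for k ≤ b-1
lemma no_consec (b i j i' j' : ℕ) (hb : 1 ≤ b) (hj : j + 1 ≤ b) (hj' : j' + 1 ≤ b)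
    (h : (2*b+1)*i + 2*j = (2*b+1)*i' + 2*j' + 1) : False := by
  rcases le_total i i' with h' | h'
  · obtain ⟨d, rfl⟩ := Nat.exists_eq_add_of_le h'
    have hexp : (2*b+1)*(i+d) = (2*b+1)*i + (2*b+1)*d := by ring
    rw [hexp] at h
    rcases Nat.eq_zero_or_pos d with rfl | hd
    · simp at h; omega
    · have hQ : 2*b+1 ≤ (2*b+1)*d := Nat.le_mul_of_pos_right _ hd
      obtain ⟨P, hP⟩ : ∃ x, (2*b+1)*i = x := ⟨_, rfl⟩
      obtain ⟨Q, hQ'⟩ : ∃ x, (2*b+1)*d = x := ⟨_, rfl⟩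
      rw [hP, hQ'] at h
      rw [hQ'] at hQ
      omega
  · obtain ⟨d, rfl⟩ := Nat.exists_eq_add_of_le h'
    have hexp : (2*b+1)*(i'+d) = (2*b+1)*i' + (2*b+1)*d := by ring
    rw [hexp] at h
    rcases Nat.eq_zero_or_pos d with rfl | hd
    · simp at h; omega
    · have hQ : 2*b+1 ≤ (2*b+1)*d := Nat.le_mul_of_pos_right _ hd
      obtain ⟨P, hP⟩ : ∃ x, (2*b+1)*i' = x := ⟨_, rfl⟩
      obtain ⟨Q, hQ'⟩ : ∃ x, (2*b+1)*d = x := ⟨_, rfl⟩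
      rw [hP, hQ'] at h
      rw [hQ'] at hQ
      omega

-- the key contradiction for k ≤ b - 1 at degree (2b+1)k - 1
lemma key_low (b k u0 u1 i j l i' j' l' : ℕ) (hb : 1 ≤ b) (hkb : k + 1 ≤ b)
    (hk : i + j + l = k) (hk' : i' + j' + l' = k)
    (h1 : (2*b+1)*i + 2*j ≤ u0 + 1) (h2 : (2*b-1)*j + (2*b+1)*l ≤ u1)
    (h3 : (2*b+1)*i' + 2*j' ≤ u0) (h4 : (2*b-1)*j' + (2*b+1)*l' ≤ u1 + 1)
    (hd : u0 + u1 + 1 = (2*b+1)*k) : False := by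
  have hS1 := sum_id b i j l hb
  have hS2 := sum_id b i' j' l' hb
  rw [hk] at hS1
  rw [hk'] at hS2
  have e1 : (2*b+1)*i + 2*j = u0 + 1 := by omega
  have e2 : (2*b+1)*i' + 2*j' = u0 := by omega
  exact no_consec b i j i' j' hb (by omega) (by omega) (by omega)

-- witness arithmetic for the high case: k = b + t, a = 2b, c = (2b+1)*(b-1+t)
lemma high_x_second (b t : ℕ) (hb : 1 ≤ b) :
    (2*b-1)*0 + (2*b+1)*(b-1+t) ≤ (2*b+1)*(b-1+t) := by omega

lemma high_y_second (b t : ℕ) (hb : 1 ≤ b) :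
    (2*b-1)*b + (2*b+1)*t ≤ (2*b+1)*(b-1+t) + 1 := by
  obtain ⟨β, rfl⟩ : ∃ β, b = β + 1 := ⟨b - 1, by omega⟩
  have h : 2*(β+1)-1 = 2*β+1 := by omega
  have h2 : β+1-1+t = β+t := by omega
  rw [h, h2]
  have : (2*β+1)*(β+1) + (2*(β+1)+1)*t = (2*(β+1)+1)*(β+t) + 1 := by ring
  omega

lemma high_nonmem (b t i j l : ℕ) (hb : 1 ≤ b) (hk : i + j + l = b + t)
    (h1 : (2*b+1)*i + 2*j ≤ 2*b) (h2 : (2*b-1)*j + (2*b+1)*l ≤ (2*b+1)*(b-1+t)) :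
    False := by
  have hi : i = 0 := by
    by_contra hi
    have : 2*b+1 ≤ (2*b+1)*i := Nat.le_mul_of_pos_right _ (by omega)
    omega
  subst hi
  have hS := sum_id b 0 j l hb
  rw [hk] at hS
  have hT : (2*b+1)*(b-1+t) + (2*b+1) = (2*b+1)*(b+t) := by
    obtain ⟨β, rfl⟩ : ∃ β, b = β + 1 := ⟨b - 1, by omega⟩
    have h : β+1-1+t = β+t := by omega
    rw [h]; ring
  omega

-- witness arithmetic for k = b-1 case
lemma bm1_x_second (b : ℕ) (hb : 2 ≤ b) :
    (2*b-1)*1 + (2*b+1)*(b-2) ≤ (2*b+1)*(b-1) - 1 := by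
  obtain ⟨β, rfl⟩ : ∃ β, b = β + 2 := ⟨b - 2, by omega⟩
  have h1 : 2*(β+2)-1 = 2*β+3 := by omega
  have h2 : β+2-2 = β := by omega
  have h3 : β+2-1 = β+1 := by omega
  rw [h1, h2, h3]
  have : (2*β+3)*1 + (2*(β+2)+1)*β + 2 = (2*(β+2)+1)*(β+1) := by ring
  omega

lemma bm1_y_second (b : ℕ) (hb : 2 ≤ b) :
    (2*b-1)*0 + (2*b+1)*(b-1) ≤ ((2*b+1)*(b-1) - 1) + 1 := by
  have : 1 ≤ (2*b+1)*(b-1) := by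
    have : 1*1 ≤ (2*b+1)*(b-1) := Nat.mul_le_mul (by omega) (by omega)
    omega
  omega

lemma bm1_nonmem (b i j l : ℕ) (hb : 2 ≤ b) (hk : i + j + l = b - 1)
    (h1 : (2*b+1)*i + 2*j ≤ 1) (h2 : (2*b-1)*j + (2*b+1)*l ≤ (2*b+1)*(b-1) - 1) :
    False := by
  have hi : i = 0 := by
    by_contra hi
    have : 2*b+1 ≤ (2*b+1)*i := Nat.le_mul_of_pos_right _ (by omega)
    omega
  have hj : j = 0 := by omega
  subst hi; subst hj
  have hl : l = b - 1 := by omega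
  subst hl
  have hpos : 1 ≤ (2*b+1)*(b-1) := by
    have : 1*1 ≤ (2*b+1)*(b-1) := Nat.mul_le_mul (by omega) (by omega)
    omega
  omega



lemma high_V (b t : ℕ) (hb : 1 ≤ b) :
    (2*b + (2*b+1)*(b-1+t)) + 1 = (2*b+1)*(b+t) := by
  obtain ⟨β, rfl⟩ : ∃ β, b = β + 1 := ⟨b - 1, by omega⟩
  have h : β+1-1+t = β+t := by omega
  rw [h]
  have : (2*(β+1) + (2*(β+1)+1)*(β+t)) + 1 = (2*(β+1)+1)*(β+1+t) := by ring
  omega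

lemma bm1_pos (b : ℕ) (hb : 2 ≤ b) : 1 ≤ (2*b+1)*(b-1) := by
  have : 1*1 ≤ (2*b+1)*(b-1) := Nat.mul_le_mul (by omega) (by omega)
  omega

section Vnum
variable (K : Type*) [Field K] (b : ℕ)

lemma mem_II_pow_iff (k : ℕ) (f : MvPolynomial (Fin 2) K) :
    f ∈ (II K b) ^ k ↔
    ∀ d ∈ f.support, ∃ i j l, i + j + l = k ∧
      (2*b+1)*i + 2*j ≤ d 0 ∧ (2*b-1)*j + (2*b+1)*l ≤ d 1 := by
  unfold II; exact mem_pow_iff K b k f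

lemma mono_mem_II_pow_iff (k a c : ℕ) :
    (monomial (ee a c) (1 : K)) ∈ (II K b) ^ k ↔
    ∃ i j l, i + j + l = k ∧ (2*b+1)*i + 2*j ≤ a ∧ (2*b-1)*j + (2*b+1)*l ≤ c := by
  unfold II; exact mono_mem_pow_iff K b k a c

lemma X0_pow_mono (n : ℕ) : (X 0 : MvPolynomial (Fin 2) K) ^ n = monomial (ee n 0) 1 := by
  have s0 : ee n 0 = Finsupp.single 0 n := by
    ext i; fin_cases i <;> simp [ee, Finsupp.single_apply]
  rw [s0, X_pow_eq_monomial]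

lemma X1_pow_mono (n : ℕ) : (X 1 : MvPolynomial (Fin 2) K) ^ n = monomial (ee 0 n) 1 := by
  have s0 : ee 0 n = Finsupp.single 1 n := by
    ext i; fin_cases i <;> simp [ee, Finsupp.single_apply]
  rw [s0, X_pow_eq_monomial]

lemma X0_mul_mono (a c : ℕ) :
    (X 0 : MvPolynomial (Fin 2) K) * monomial (ee a c) 1 = monomial (ee (a+1) c) 1 := by
  have h : (X 0 : MvPolynomial (Fin 2) K) = monomial (ee 1 0) 1 := by
    rw [← X0_pow_mono, pow_one]
  rw [h, monomial_mul, one_mul, ee_add]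
  have : ee (1+a) (0+c) = ee (a+1) c := ee_congr (by omega) (by omega)
  rw [this]

lemma X1_mul_mono (a c : ℕ) :
    (X 1 : MvPolynomial (Fin 2) K) * monomial (ee a c) 1 = monomial (ee a (c+1)) 1 := by
  have h : (X 1 : MvPolynomial (Fin 2) K) = monomial (ee 0 1) 1 := by
    rw [← X1_pow_mono, pow_one]
  rw [h, monomial_mul, one_mul, ee_add]
  have : ee (0+a) (1+c) = ee a (c+1) := ee_congr (by omega) (by omega)
  rw [this]

lemma colon_eq_mm (k : ℕ) {W : MvPolynomial (Fin 2) K}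
    (hW : W ∉ (II K b) ^ k) (hx : X 0 * W ∈ (II K b) ^ k) (hy : X 1 * W ∈ (II K b) ^ k) :
    Submodule.colon ((II K b) ^ k) (Ideal.span {W}) = mm K := by
  have hle : mm K ≤ Submodule.colon ((II K b) ^ k) (Ideal.span {W}) := by
    rw [mm, Ideal.span_le]
    rintro p (rfl | rfl)
    · exact Ideal.mem_colon_span_singleton.mpr hx
    · exact Ideal.mem_colon_span_singleton.mpr hy
  have hne : Submodule.colon ((II K b) ^ k) (Ideal.span {W}) ≠ ⊤ := by
    intro h
    apply hW
    have h1 : (1 : MvPolynomial (Fin 2) K) ∈ Submodule.colon ((II K b) ^ k) (Ideal.span {W}) := by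
      rw [h]; trivial
    simpa using Ideal.mem_colon_span_singleton.mp h1
  exact ((mm_isMaximal K).eq_of_le hne hle).symm

lemma of_colon_eq_mm (k : ℕ) {f : MvPolynomial (Fin 2) K}
    (h : Submodule.colon ((II K b) ^ k) (Ideal.span {f}) = mm K) :
    f ≠ 0 ∧ X 0 * f ∈ (II K b) ^ k ∧ X 1 * f ∈ (II K b) ^ k := by
  refine ⟨?_, ?_, ?_⟩
  · rintro rfl
    apply mm_ne_top K
    rw [← h, eq_top_iff]
    intro r _
    exact Ideal.mem_colon_span_singleton.mpr (by simp)
  · have hX : (X 0 : MvPolynomial (Fin 2) K) ∈ mm K := Ideal.subset_span (Or.inl rfl)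
    rw [← h] at hX
    exact Ideal.mem_colon_span_singleton.mp hX
  · have hX : (X 1 : MvPolynomial (Fin 2) K) ∈ mm K := Ideal.subset_span (Or.inr rfl)
    rw [← h] at hX
    exact Ideal.mem_colon_span_singleton.mp hX

lemma exists_good_support (k d : ℕ) {f : MvPolynomial (Fin 2) K}
    (hf : f.IsHomogeneous d) (hne : f ≠ 0)
    (hx : X 0 * f ∈ (II K b) ^ k) (hy : X 1 * f ∈ (II K b) ^ k) :
    ∃ u0 u1 : ℕ, u0 + u1 = d ∧
      (∃ i j l, i + j + l = k ∧ (2*b+1)*i + 2*j ≤ u0 + 1 ∧ (2*b-1)*j + (2*b+1)*l ≤ u1) ∧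
      (∃ i j l, i + j + l = k ∧ (2*b+1)*i + 2*j ≤ u0 ∧ (2*b-1)*j + (2*b+1)*l ≤ u1 + 1) := by
  obtain ⟨u, hu⟩ := support_nonempty.mpr hne
  have hcu : coeff u f ≠ 0 := mem_support_iff.mp hu
  have hdeg : u 0 + u 1 = d := by
    have h1 : (Finsupp.weight 1) u = d := hf hcu
    have h2 := degree_eq u
    rw [Finsupp.degree_eq_weight_one, ← Pi.one_def] at h2
    omega
  have hmem0 : Finsupp.single 0 1 + u ∈ (X 0 * f).support := by
    rw [mem_support_iff, coeff_X_mul]; exact hcu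
  have hmem1 : Finsupp.single 1 1 + u ∈ (X 1 * f).support := by
    rw [mem_support_iff, coeff_X_mul]; exact hcu
  obtain ⟨i, j, l, hs, ha, hc⟩ := (mem_II_pow_iff K b k _).mp hx _ hmem0
  obtain ⟨i', j', l', hs', ha', hc'⟩ := (mem_II_pow_iff K b k _).mp hy _ hmem1
  have v00 : (Finsupp.single (0 : Fin 2) (1:ℕ) + u) 0 = u 0 + 1 := by
    simp [Finsupp.single_apply, Nat.add_comm]
  have v01 : (Finsupp.single (0 : Fin 2) (1:ℕ) + u) 1 = u 1 := by
    simp [Finsupp.single_apply]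
  have v10 : (Finsupp.single (1 : Fin 2) (1:ℕ) + u) 0 = u 0 := by
    simp [Finsupp.single_apply]
  have v11 : (Finsupp.single (1 : Fin 2) (1:ℕ) + u) 1 = u 1 + 1 := by
    simp [Finsupp.single_apply, Nat.add_comm]
  rw [v00] at ha; rw [v01] at hc; rw [v10] at ha'; rw [v11] at hc'
  exact ⟨u 0, u 1, hdeg, ⟨i, j, l, hs, ha, hc⟩, ⟨i', j', l', hs', ha', hc'⟩⟩

lemma vnum_high (hb : 1 ≤ b) (t : ℕ) :
    vnum ((II K b) ^ (b + t)) = 2*b + (2*b+1)*(b-1+t) := by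
  have hAss := ass_II_pow K b (b+t) (by omega)
  have hWhom : (monomial (ee (2*b) ((2*b+1)*(b-1+t))) (1:K)).IsHomogeneous
      (2*b + (2*b+1)*(b-1+t)) := isHomogeneous_monomial _ (by rw [ee_degree])
  have hx : X 0 * monomial (ee (2*b) ((2*b+1)*(b-1+t))) (1:K) ∈ (II K b) ^ (b+t) := by
    rw [X0_mul_mono, mono_mem_II_pow_iff]
    exact ⟨1, 0, b-1+t, by omega, by omega, high_x_second b t hb⟩
  have hy : X 1 * monomial (ee (2*b) ((2*b+1)*(b-1+t))) (1:K) ∈ (II K b) ^ (b+t) := by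
    rw [X1_mul_mono, mono_mem_II_pow_iff]
    exact ⟨0, b, t, by omega, by omega, high_y_second b t hb⟩
  have hW : monomial (ee (2*b) ((2*b+1)*(b-1+t))) (1:K) ∉ (II K b) ^ (b+t) := by
    rw [mono_mem_II_pow_iff]
    rintro ⟨i, j, l, hk, h1, h2⟩
    exact high_nonmem b t i j l hb hk h1 h2
  have hcol := colon_eq_mm K b (b+t) hW hx hy
  simp only [vnum]
  have hmemV : (2*b + (2*b+1)*(b-1+t)) ∈ {d | ∃ p ∈ associatedPrimes (MvPolynomial (Fin 2) K)
      (MvPolynomial (Fin 2) K ⧸ (II K b) ^ (b+t)),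
      ∃ f : MvPolynomial (Fin 2) K, f.IsHomogeneous d ∧
        Submodule.colon ((II K b) ^ (b+t)) (Ideal.span {f}) = p} :=
    ⟨mm K, by rw [hAss]; rfl, _, hWhom, hcol⟩
  refine le_antisymm (Nat.sInf_le hmemV) (le_csInf ⟨_, hmemV⟩ ?_)
  rintro d ⟨p, hp, f, hfhom, hcolf⟩
  rw [hAss, Set.mem_singleton_iff] at hp
  subst hp
  obtain ⟨hne, hx', hy'⟩ := of_colon_eq_mm K b (b+t) hcolf
  obtain ⟨u0, u1, hdeg, ⟨i, j, l, hs, hA, hB⟩, -⟩ :=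
    exists_good_support K b (b+t) d hfhom hne hx' hy'
  have hgl := gen_lower b (b+t) u0 u1 i j l hb hs hA hB
  have hV := high_V b t hb
  omega

lemma vnum_bm1 (hb2 : 2 ≤ b) :
    vnum ((II K b) ^ (b - 1)) = (2*b+1)*(b-1) := by
  have hb : 1 ≤ b := by omega
  have hpos := bm1_pos b hb2
  have hAss := ass_II_pow K b (b-1) (by omega)
  have hWhom : (monomial (ee 1 ((2*b+1)*(b-1) - 1)) (1:K)).IsHomogeneous ((2*b+1)*(b-1)) :=
    isHomogeneous_monomial _ (by rw [ee_degree]; omega)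
  have hx : X 0 * monomial (ee 1 ((2*b+1)*(b-1) - 1)) (1:K) ∈ (II K b) ^ (b-1) := by
    rw [X0_mul_mono, mono_mem_II_pow_iff]
    exact ⟨0, 1, b-2, by omega, by omega, bm1_x_second b hb2⟩
  have hy : X 1 * monomial (ee 1 ((2*b+1)*(b-1) - 1)) (1:K) ∈ (II K b) ^ (b-1) := by
    rw [X1_mul_mono, mono_mem_II_pow_iff]
    exact ⟨0, 0, b-1, by omega, by omega, bm1_y_second b hb2⟩
  have hW : monomial (ee 1 ((2*b+1)*(b-1) - 1)) (1:K) ∉ (II K b) ^ (b-1) := by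
    rw [mono_mem_II_pow_iff]
    rintro ⟨i, j, l, hk, h1, h2⟩
    exact bm1_nonmem b i j l hb2 hk h1 h2
  have hcol := colon_eq_mm K b (b-1) hW hx hy
  simp only [vnum]
  have hmemV : ((2*b+1)*(b-1)) ∈ {d | ∃ p ∈ associatedPrimes (MvPolynomial (Fin 2) K)
      (MvPolynomial (Fin 2) K ⧸ (II K b) ^ (b-1)),
      ∃ f : MvPolynomial (Fin 2) K, f.IsHomogeneous d ∧
        Submodule.colon ((II K b) ^ (b-1)) (Ideal.span {f}) = p} :=
    ⟨mm K, by rw [hAss]; rfl, _, hWhom, hcol⟩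
  refine le_antisymm (Nat.sInf_le hmemV) (le_csInf ⟨_, hmemV⟩ ?_)
  rintro d ⟨p, hp, f, hfhom, hcolf⟩
  rw [hAss, Set.mem_singleton_iff] at hp
  subst hp
  obtain ⟨hne, hx', hy'⟩ := of_colon_eq_mm K b (b-1) hcolf
  obtain ⟨u0, u1, hdeg, ⟨i, j, l, hs, hA, hB⟩, ⟨i', j', l', hs', hA', hB'⟩⟩ :=
    exists_good_support K b (b-1) d hfhom hne hx' hy'
  have hgl := gen_lower b (b-1) u0 u1 i j l hb hs hA hB
  by_contra hlt
  push_neg at hlt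
  have hd1 : u0 + u1 + 1 = (2*b+1)*(b-1) := by omega
  exact key_low b (b-1) u0 u1 i j l i' j' l' hb (by omega) hs hs' hA hB hA' hB' hd1

lemma alpha_II (hb : 1 ≤ b) : alphaDeg (II K b) = 2*b+1 := by
  simp only [alphaDeg]
  have hmem : (2*b+1) ∈ {d | ∃ f ∈ II K b, f ≠ 0 ∧ f.IsHomogeneous d} := by
    refine ⟨X 0 ^ (2*b+1), ?_, pow_ne_zero _ (X_ne_zero 0), ?_⟩
    · exact Ideal.subset_span (Or.inl rfl)
    · rw [X0_pow_mono]
      exact isHomogeneous_monomial _ (by rw [ee_degree])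
  refine le_antisymm (Nat.sInf_le hmem) (le_csInf ⟨_, hmem⟩ ?_)
  rintro d ⟨f, hf, hne, hhom⟩
  rw [← pow_one (II K b)] at hf
  obtain ⟨u, hu⟩ := support_nonempty.mpr hne
  obtain ⟨i, j, l, hs, h1, h2⟩ := (mem_II_pow_iff K b 1 f).mp hf u hu
  have hdeg : u 0 + u 1 = d := by
    have hw : (Finsupp.weight 1) u = d := hhom (mem_support_iff.mp hu)
    have h2' := degree_eq u
    rw [Finsupp.degree_eq_weight_one, ← Pi.one_def] at h2'
    omega
  have hid := sum_id b i j l hb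
  rw [hs] at hid
  omega

end Vnum

end VProof

open VProof in
/-- For `S = K[x,y]`, `b ≥ 1` and
`I = (x^{2b+1}, x^2 y^{2b-1}, y^{2b+1})`, one has `astab(I) = 1` and `vstab(I) = b`. -/
theorem astab_vstab_of_example (K : Type*) [Field K] (b : ℕ) (hb : 1 ≤ b)
    (I : Ideal (MvPolynomial (Fin 2) K))
    (hI : I = Ideal.span {X 0 ^ (2*b+1), X 0 ^ 2 * X 1 ^ (2*b-1), X 1 ^ (2*b+1)}) :
    astab I = 1 ∧ vstab I = b := by
  have hII : I = II K b := hI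
  subst hII
  constructor
  · -- astab = 1
    simp only [astab]
    have h1mem : 1 ∈ {k₀ | 1 ≤ k₀ ∧ ∀ k, k₀ ≤ k →
        associatedPrimes (MvPolynomial (Fin 2) K) (MvPolynomial (Fin 2) K ⧸ (II K b) ^ k)
          = associatedPrimes (MvPolynomial (Fin 2) K)
              (MvPolynomial (Fin 2) K ⧸ (II K b) ^ k₀)} := by
      refine ⟨le_refl 1, fun k hk => ?_⟩
      rw [ass_II_pow K b k hk, ass_II_pow K b 1 (le_refl 1)]
    refine le_antisymm (Nat.sInf_le h1mem) ?_
    by_contra h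
    push_neg at h
    have h0 : sInf {k₀ | 1 ≤ k₀ ∧ ∀ k, k₀ ≤ k →
        associatedPrimes (MvPolynomial (Fin 2) K) (MvPolynomial (Fin 2) K ⧸ (II K b) ^ k)
          = associatedPrimes (MvPolynomial (Fin 2) K)
              (MvPolynomial (Fin 2) K ⧸ (II K b) ^ k₀)} = 0 := by omega
    rcases Nat.sInf_eq_zero.mp h0 with h0' | h0'
    · exact absurd h0'.1 (by omega)
    · rw [h0'] at h1mem
      exact h1mem
  · -- vstab = b
    simp only [vstab]
    have hbmem : b ∈ {k₀ : ℕ | 1 ≤ k₀ ∧ ∃ c : ℤ, ∀ k : ℕ, k₀ ≤ k →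
        (vnum ((II K b) ^ k) : ℤ) = (alphaDeg (II K b) : ℤ) * k + c} := by
      refine ⟨hb, -1, fun k hk => ?_⟩
      obtain ⟨t, rfl⟩ := Nat.exists_eq_add_of_le hk
      rw [vnum_high K b hb t, alpha_II K b hb]
      have hV := high_V b t hb
      have hcast : ((2*b + (2*b+1)*(b-1+t) : ℕ) : ℤ) + 1 = ((2*b+1)*(b+t) : ℕ) := by
        exact_mod_cast hV
      push_cast at hcast ⊢
      linarith
    refine le_antisymm (Nat.sInf_le hbmem) (le_csInf ⟨_, hbmem⟩ ?_)
    rintro x ⟨hx1, c, hc⟩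
    by_contra hlt
    push_neg at hlt
    have h2b : 2 ≤ b := by omega
    have e1 := hc (b-1) (by omega)
    have e2 := hc b (by omega)
    rw [vnum_bm1 K b h2b, alpha_II K b hb] at e1
    have hvh := vnum_high K b hb 0
    rw [Nat.add_zero] at hvh
    rw [hvh, alpha_II K b hb] at e2
    have hV := high_V b 0 hb
    rw [Nat.add_zero] at hV
    have hcast : ((2*b + (2*b+1)*(b-1+0) : ℕ) : ℤ) + 1 = ((2*b+1)*b : ℕ) := by
      exact_mod_cast hV
    have hcast2 : ((b - 1 : ℕ) : ℤ) = (b : ℤ) - 1 := by omega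
    push_cast [hcast2] at e1 e2 hcast
    nlinarith [e1, e2, hcast]
end

section
/- Let K be a field, S = K[x,y], b ≥ 2 an integer, k an integer with 1 ≤ k < b, and I = (x^{2b+1}, x^2 y^{2b-1}, y^{2b+1}) ⊆ S. For 0 ≤ j ≤ i ≤ k set u_{i,j} = x^{(2b+1)(k-i)+2(i-j)} y^{(2b+1)i-2(i-j)}. Then, ordering the pairs (i,j) lexicographically as (0,0), (1,0), (1,1), (2,0), …, (k,k-1), (k,k), the x-degrees of the monomials u_{i,j} are strictly decreasing along this order and the y-degrees are strictly increasing; in particular the monomials u_{i,j}, 0 ≤ j ≤ i ≤ k, form the minimal monomial generating set of I^k. -/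
/-!
Each `u i j` is the product `(x^(2b+1))^(k-i) (x^2 y^(2b-1))^(i-j) (y^(2b+1))^j` of `k` generators
of `I`, so the `u i j` are exactly the products of `k` generators and span `I^k`. All of them have
degree `(2b+1)k`, and the `y`-degree `(2b-1)i + 2j` increases strictly in the lexicographic order
because `2i < 2b-1` for `i < k < b`. Hence the `x`-degree decreases strictly, and for distinct
pairs one of the two degrees blocks divisibility.
-/

open MvPolynomial

open Pointwise

theorem Set.insert_insert_singleton_pow {M : Type*} [CommMonoid M] (a b c : M) (n : ℕ) :
    ({a, b, c} : Set M) ^ n = {v | ∃ p q r, p + q + r = n ∧ v = a ^ p * b ^ q * c ^ r} := by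
  induction n with
  | zero => ext v; simp
  | succ n ih =>
    ext v
    rw [pow_succ, ih]
    constructor
    · rintro ⟨w, ⟨p, q, r, rfl, rfl⟩, x, hx, rfl⟩
      rcases hx with rfl | rfl | rfl
      · exact ⟨p + 1, q, r, by omega, by rw [pow_succ]; ac_rfl⟩
      · exact ⟨p, q + 1, r, by omega, by rw [pow_succ]; ac_rfl⟩
      · exact ⟨p, q, r + 1, by omega, by rw [pow_succ]; ac_rfl⟩
    · rintro ⟨p, q, r, hn, rfl⟩
      obtain ⟨p, rfl⟩ | ⟨q, rfl⟩ | ⟨r, rfl⟩ :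
          (∃ p', p = p' + 1) ∨ (∃ q', q = q' + 1) ∨ ∃ r', r = r' + 1 := by
        rcases p with _ | p <;> rcases q with _ | q <;> rcases r with _ | r <;> simp_all
      · exact ⟨_, ⟨p, q, r, by omega, rfl⟩, a, by simp, by rw [pow_succ]; ac_rfl⟩
      · exact ⟨_, ⟨p, q, r, by omega, rfl⟩, b, by simp, by rw [pow_succ]; ac_rfl⟩
      · exact ⟨_, ⟨p, q, r, by omega, rfl⟩, c, by simp, by rw [pow_succ]; ac_rfl⟩

theorem Ideal.span_insert_insert_singleton_pow {R : Type*} [CommSemiring R] (a b c : R) (k : ℕ) :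
    Ideal.span {a, b, c} ^ k
      = Ideal.span {v | ∃ i j, j ≤ i ∧ i ≤ k ∧ v = a ^ (k - i) * b ^ (i - j) * c ^ j} := by
  rw [Submodule.span_pow, Set.insert_insert_singleton_pow]
  congr 1
  ext v
  constructor
  · rintro ⟨p, q, r, rfl, rfl⟩
    exact ⟨q + r, r, by omega, by omega, by
      rw [show p + q + r - (q + r) = p by omega, Nat.add_sub_cancel]⟩
  · rintro ⟨i, j, hj, hi, rfl⟩
    exact ⟨k - i, i - j, j, by omega, rfl⟩

theorem MvPolynomial.X_pow_mul_X_pow_dvd_iff {σ R : Type*} [CommSemiring R] [Nontrivial R]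
    {s t : σ} (hst : s ≠ t) (a c a' c' : ℕ) :
    (X s ^ a * X t ^ c : MvPolynomial σ R) ∣ X s ^ a' * X t ^ c' ↔ a ≤ a' ∧ c ≤ c' := by
  refine ⟨fun h => ?_, fun ⟨ha, hc⟩ => mul_dvd_mul (pow_dvd_pow _ ha) (pow_dvd_pow _ hc)⟩
  simp only [X_pow_eq_monomial, monomial_mul, one_mul, monomial_dvd_monomial, one_ne_zero,
    false_or] at h
  have hs := h.1 s
  have ht := h.1 t
  simp [hst, hst.symm] at hs ht
  exact ⟨hs, ht⟩

/-- With `c = 2b - 1`, the exponents of `x` and `y` in `u i j` are `xExp c k i j` and `yExp c i j`. -/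
def xExp (c k i j : ℕ) : ℕ := (c + 2) * (k - i) + 2 * (i - j)

def yExp (c i j : ℕ) : ℕ := c * i + 2 * j

section Exponents

variable {c k i j i' j' : ℕ}

theorem xExp_add_yExp (hi : i ≤ k) (hj : j ≤ i) : xExp c k i j + yExp c i j = (c + 2) * k := by
  obtain ⟨t, rfl⟩ := Nat.exists_eq_add_of_le hi
  rw [xExp, yExp, Nat.add_sub_cancel_left]
  ring_nf
  omega

theorem yExp_lt_of_lex (hi' : 2 * i' ≤ c + 1) (hj : j ≤ i) (h : i < i' ∨ i = i' ∧ j < j') :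
    yExp c i j < yExp c i' j' := by
  rcases h with h | ⟨rfl, h⟩
  · have : c * i + c ≤ c * i' := by nlinarith
    simp only [yExp]
    omega
  · simp only [yExp]
    omega

theorem xExp_lt_and_yExp_lt_of_lex (hk : 2 * k ≤ c + 1) (hj : j ≤ i) (hj' : j' ≤ i')
    (hi' : i' ≤ k) (h : i < i' ∨ i = i' ∧ j < j') :
    xExp c k i' j' < xExp c k i j ∧ yExp c i j < yExp c i' j' := by
  have hy := yExp_lt_of_lex (c := c) (by omega) hj h
  have := xExp_add_yExp (c := c) (show i ≤ k by omega) hj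
  have := xExp_add_yExp (c := c) hi' hj'
  omega

theorem generator_pow_mul_pow_mul_pow {M : Type*} [CommMonoid M] (x y : M) (hj : j ≤ i) :
    (x ^ (c + 2)) ^ (k - i) * (x ^ 2 * y ^ c) ^ (i - j) * (y ^ (c + 2)) ^ j
      = x ^ xExp c k i j * y ^ yExp c i j := by
  obtain ⟨m, rfl⟩ := Nat.exists_eq_add_of_le hj
  rw [xExp, yExp, Nat.add_sub_cancel_left, show c * (j + m) + 2 * j = c * m + (c + 2) * j by ring,
    mul_pow, ← pow_mul, ← pow_mul, ← pow_mul, ← pow_mul, pow_add, pow_add]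
  ac_rfl

end Exponents

theorem u_minimal_generators_general (K : Type*) [Field K] (b k : ℕ)
    (hkb : k < b)
    (I : Ideal (MvPolynomial (Fin 2) K))
    (hI : I = Ideal.span {X 0 ^ (2*b+1), X 0 ^ 2 * X 1 ^ (2*b-1), X 1 ^ (2*b+1)})
    (Dx Dy : ℕ → ℕ → ℕ)
    (hDx : ∀ i j, Dx i j = (2*b+1)*(k-i) + 2*(i-j))
    (hDy : ∀ i j, Dy i j = (2*b+1)*i - 2*(i-j))
    (u : ℕ → ℕ → MvPolynomial (Fin 2) K)
    (hu : ∀ i j, u i j = X 0 ^ (Dx i j) * X 1 ^ (Dy i j)) :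
    (∀ i j i' j', j ≤ i → i ≤ k → j' ≤ i' → i' ≤ k →
      (i < i' ∨ (i = i' ∧ j < j')) → Dx i' j' < Dx i j ∧ Dy i j < Dy i' j') ∧
    I ^ k = Ideal.span {v : MvPolynomial (Fin 2) K | ∃ i j : ℕ, j ≤ i ∧ i ≤ k ∧ v = u i j} ∧
    (∀ i j i' j', j ≤ i → i ≤ k → j' ≤ i' → i' ≤ k → (i, j) ≠ (i', j') →
      ¬ u i j ∣ u i' j') := by
  obtain ⟨c, hB, hc⟩ : ∃ c, 2*b+1 = c+2 ∧ 2*b-1 = c := ⟨2*b-1, by omega, rfl⟩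
  have hDx' : ∀ i j, Dx i j = xExp c k i j := fun i j => by rw [hDx, hB, xExp]
  have hDy' : ∀ i j, j ≤ i → Dy i j = yExp c i j := fun i j hj => by
    rw [hDy, hB, yExp, add_mul]; omega
  have hmono : ∀ i j i' j', j ≤ i → i ≤ k → j' ≤ i' → i' ≤ k →
      (i < i' ∨ (i = i' ∧ j < j')) → Dx i' j' < Dx i j ∧ Dy i j < Dy i' j' := by
    intro i j i' j' hj _ hj' hi' hlex
    rw [hDx', hDx', hDy' i j hj, hDy' i' j' hj']
    exact xExp_lt_and_yExp_lt_of_lex (by omega) hj hj' hi' hlex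
  have hu_prod : ∀ i j, j ≤ i → u i j = (X 0 ^ (2*b+1)) ^ (k-i) * (X 0 ^ 2 * X 1 ^ (2*b-1)) ^ (i-j)
      * (X 1 ^ (2*b+1)) ^ j := fun i j hj => by
    rw [hu, hDx', hDy' i j hj, hB, hc, generator_pow_mul_pow_mul_pow _ _ hj]
  refine ⟨hmono, ?_, ?_⟩
  · rw [hI, Ideal.span_insert_insert_singleton_pow]
    congr 1
    ext v
    exact exists₂_congr fun i j => and_congr_right fun hj => and_congr_right fun _ => by
      rw [hu_prod i j hj]
  · intro i j i' j' hj hi hj' hi' hne hdvd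
    rw [hu, hu, X_pow_mul_X_pow_dvd_iff (by decide)] at hdvd
    have := hmono i j i' j' hj hi hj' hi'
    have := hmono i' j' i j hj' hi' hj hi
    simp only [ne_eq, Prod.mk.injEq] at hne
    omega

/-- For `S = K[x,y]`, `b ≥ 2`, `1 ≤ k < b` and
`I = (x^{2b+1}, x^2 y^{2b-1}, y^{2b+1})`, the monomials
`u_{i,j} = x^{(2b+1)(k-i)+2(i-j)} y^{(2b+1)i-2(i-j)}`, `0 ≤ j ≤ i ≤ k`, have strictly
decreasing `x`-degrees and strictly increasing `y`-degrees along the lexicographic order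
on pairs `(i,j)`; in particular, they form the minimal monomial generating set of `I^k`
(they generate `I^k` and none divides another). -/
theorem u_minimal_generators (K : Type*) [Field K] (b k : ℕ)
    (hb : 2 ≤ b) (hk1 : 1 ≤ k) (hkb : k < b)
    (I : Ideal (MvPolynomial (Fin 2) K))
    (hI : I = Ideal.span {X 0 ^ (2*b+1), X 0 ^ 2 * X 1 ^ (2*b-1), X 1 ^ (2*b+1)})
    (Dx Dy : ℕ → ℕ → ℕ)
    (hDx : ∀ i j, Dx i j = (2*b+1)*(k-i) + 2*(i-j))
    (hDy : ∀ i j, Dy i j = (2*b+1)*i - 2*(i-j))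
    (u : ℕ → ℕ → MvPolynomial (Fin 2) K)
    (hu : ∀ i j, u i j = X 0 ^ (Dx i j) * X 1 ^ (Dy i j)) :
    (∀ i j i' j', j ≤ i → i ≤ k → j' ≤ i' → i' ≤ k →
      (i < i' ∨ (i = i' ∧ j < j')) → Dx i' j' < Dx i j ∧ Dy i j < Dy i' j') ∧
    I ^ k = Ideal.span {v : MvPolynomial (Fin 2) K | ∃ i j : ℕ, j ≤ i ∧ i ≤ k ∧ v = u i j} ∧
    (∀ i j i' j', j ≤ i → i ≤ k → j' ≤ i' → i' ≤ k → (i, j) ≠ (i', j') →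
      ¬ u i j ∣ u i' j') :=
  u_minimal_generators_general K b k hkb I hI Dx Dy hDx hDy u hu
end

section
/- Let K be a field and J = (xy, xz, yz) ⊆ K[x,y,z]. Then the colon ideal J^2 : (xyz) equals the maximal ideal (x,y,z). -/
open MvPolynomial

/-- The ideal of polynomials all of whose monomials have degree ≥ k. -/
noncomputable def lowDegZero (K : Type*) [Field K] (k : ℕ) :
    Ideal (MvPolynomial (Fin 3) K) where
  carrier := {f | ∀ m : Fin 3 →₀ ℕ, (∑ i, m i) < k → coeff m f = 0}
  add_mem' := by
    intro a b ha hb m hm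
    rw [coeff_add, ha m hm, hb m hm, add_zero]
  zero_mem' := by intro m hm; rw [coeff_zero]
  smul_mem' := by
    intro c f hf m hm
    rw [smul_eq_mul, coeff_mul]
    apply Finset.sum_eq_zero
    rintro ⟨u, v⟩ huv
    rw [Finset.HasAntidiagonal.mem_antidiagonal] at huv
    have hv : (∑ i, v i) ≤ ∑ i, m i := by
      rw [← huv]
      refine Finset.sum_le_sum fun i _ => ?_
      simp [Finsupp.add_apply]
    rw [hf v (lt_of_le_of_lt hv hm), mul_zero]

lemma lowDegZero_mul (K : Type*) [Field K] (a b : ℕ) :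
    lowDegZero K a * lowDegZero K b ≤ lowDegZero K (a + b) := by
  rw [Ideal.mul_le]
  intro p hp q hq m hm
  rw [coeff_mul]
  apply Finset.sum_eq_zero
  rintro ⟨u, v⟩ huv
  rw [Finset.HasAntidiagonal.mem_antidiagonal] at huv
  have hsum : (∑ i, u i) + (∑ i, v i) = ∑ i, m i := by
    rw [← huv, ← Finset.sum_add_distrib]
    exact Finset.sum_congr rfl fun i _ => rfl
  by_cases hu : (∑ i, u i) < a
  · rw [hp u hu, zero_mul]
  · have hv : (∑ i, v i) < b := by omega
    rw [hq v hv, mul_zero]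

lemma XX_mem_lowDegZero (K : Type*) [Field K] (i j : Fin 3) :
    (X i * X j : MvPolynomial (Fin 3) K) ∈ lowDegZero K 2 := by
  intro m hm
  rw [X, X, monomial_mul, coeff_monomial]
  rw [if_neg]
  intro h
  subst h
  have h2 : (∑ i', (Finsupp.single i 1 + Finsupp.single j 1 : Fin 3 →₀ ℕ) i') = 2 := by
    simp only [Finsupp.add_apply, Finset.sum_add_distrib, Finsupp.single_apply]
    simp [Finset.sum_ite_eq']
  omega

/-- For `J = (xy, xz, yz) ⊆ K[x,y,z]`, the colon ideal `J^2 : (xyz)`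
equals the maximal ideal `(x,y,z)`. -/
theorem colon_sq_eq_max (K : Type*) [Field K]
    (J : Ideal (MvPolynomial (Fin 3) K))
    (hJ : J = Ideal.span {X 0 * X 1, X 0 * X 2, X 1 * X 2}) :
    Submodule.colon (J ^ 2) (Ideal.span {X 0 * X 1 * X 2} : Ideal (MvPolynomial (Fin 3) K))
      = Ideal.span {X 0, X 1, X 2} := by
  have hJ2 : J ^ 2 ≤ lowDegZero K 4 := by
    have h1 : J ≤ lowDegZero K 2 := by
      rw [hJ, Ideal.span_le]
      rintro f (rfl | rfl | rfl) <;> exact XX_mem_lowDegZero K _ _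
    calc J ^ 2 = J * J := sq J
      _ ≤ lowDegZero K 2 * lowDegZero K 2 := Ideal.mul_mono h1 h1
      _ ≤ lowDegZero K 4 := lowDegZero_mul K 2 2
  apply le_antisymm
  · intro g hg
    rw [Ideal.mem_colon_span_singleton] at hg
    have hxyz : (X 0 * X 1 * X 2 : MvPolynomial (Fin 3) K)
        = monomial (Finsupp.single 0 1 + Finsupp.single 1 1 + Finsupp.single 2 1) 1 := by
      rw [X, X, X, monomial_mul, monomial_mul, one_mul, one_mul]
    have hc : constantCoeff g = 0 := by
      have := hJ2 hg
      have h0 := this (Finsupp.single 0 1 + Finsupp.single 1 1 + Finsupp.single 2 1) (by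
        simp only [Finsupp.add_apply, Finset.sum_add_distrib, Finsupp.single_apply]
        simp [Finset.sum_ite_eq'])
      rw [hxyz] at h0
      have h1 := coeff_mul_monomial 0 (Finsupp.single 0 1 + Finsupp.single 1 1 + Finsupp.single 2 1) (1 : K) g
      rw [zero_add, mul_one] at h1
      rw [h1] at h0
      rw [constantCoeff_eq]
      exact h0
    have himg : ({X 0, X 1, X 2} : Set (MvPolynomial (Fin 3) K)) = X '' Set.univ := by
      ext f
      constructor
      · rintro (rfl | rfl | rfl)
        · exact ⟨0, Set.mem_univ _, rfl⟩
        · exact ⟨1, Set.mem_univ _, rfl⟩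
        · exact ⟨2, Set.mem_univ _, rfl⟩
      · rintro ⟨i, -, rfl⟩
        fin_cases i
        · exact Or.inl rfl
        · exact Or.inr (Or.inl rfl)
        · exact Or.inr (Or.inr rfl)
    rw [himg, mem_ideal_span_X_image]
    intro m hm
    by_contra hall
    push_neg at hall
    have hm0 : m = 0 := by
      ext i
      exact hall i (Set.mem_univ i)
    rw [mem_support_iff, hm0] at hm
    rw [constantCoeff_eq] at hc
    exact hm hc
  · rw [Ideal.span_le]
    have mem1 : (X 0 * X 1 : MvPolynomial (Fin 3) K) ∈ J := by
      rw [hJ]; exact Ideal.subset_span (by simp)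
    have mem2 : (X 0 * X 2 : MvPolynomial (Fin 3) K) ∈ J := by
      rw [hJ]; exact Ideal.subset_span (by simp)
    have mem3 : (X 1 * X 2 : MvPolynomial (Fin 3) K) ∈ J := by
      rw [hJ]; exact Ideal.subset_span (by simp)
    rintro f (rfl | rfl | rfl) <;>
      · rw [SetLike.mem_coe, Ideal.mem_colon_span_singleton, sq]
        first
        | · have : (X 0 : MvPolynomial (Fin 3) K) * (X 0 * X 1 * X 2)
              = (X 0 * X 1) * (X 0 * X 2) := by ring
            rw [this]; exact Ideal.mul_mem_mul mem1 mem2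
        | · have : (X 1 : MvPolynomial (Fin 3) K) * (X 0 * X 1 * X 2)
              = (X 0 * X 1) * (X 1 * X 2) := by ring
            rw [this]; exact Ideal.mul_mem_mul mem1 mem3
        | · have : (X 2 : MvPolynomial (Fin 3) K) * (X 0 * X 1 * X 2)
              = (X 0 * X 2) * (X 1 * X 2) := by ring
            rw [this]; exact Ideal.mul_mem_mul mem2 mem3
end
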